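/- arXiv:2511.17055 — 5 statements merged into one kernel-verified Lean document; each statement's English description precedes it below -/
import Mathlib

section
/- Characterization of steady states, stable case: Suppose T₁ ≥ T₀. Then every smooth steady solution (v, T, q) of the perturbation primitive equations satisfies v ≡ 0 and T ≡ 0 on Ω. -/
/-!
Energy method. Put `W = ∫₀^z ∂ₓv` (minus the vertical velocity; `∫₀^H v = 0` makes it vanish at
`z = H`) and `G = ∫₀^z T`. Multiplied by `v`, resp. `T`, each equation takes the form
`dissipation + coupling = ∂ₓP + ∂_zQ` with `P` periodic in `x` and `Q = 0` on `z = 0, H` (the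
pressure term `v ∂ₓq` is `∂_z(∂ₓq ∫₀^z v)`), so that over a period cell
`∫∫ νx (∂ₓv)² + νz (∂_z v)² = g ρ₀ β ∫∫ ∂ₓv G` and
`∫∫ κx (∂ₓT)² + κz (∂_z T)² = -(T₁ - T₀)/H ∫∫ ∂ₓv G`.
Weighting the two identities by `(T₁ - T₀)/H` and `g ρ₀ β` eliminates the coupling; for `T₁ ≥ T₀`
all remaining terms are nonnegative, so `∂_z T = 0` and hence `T = 0`. Then the first identity
gives `∂_z v = 0`, and `∫₀^H v = 0` forces `v = 0`.
-/

noncomputable section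

open Real

/-- Partial derivative in x of a function of (x, z). -/
def px2 (f : ℝ → ℝ → ℝ) : ℝ → ℝ → ℝ := fun x z => deriv (fun y => f y z) x

/-- Partial derivative in z of a function of (x, z). -/
def pz2 (f : ℝ → ℝ → ℝ) : ℝ → ℝ → ℝ := fun x z => deriv (fun w => f x w) z

/-- A smooth steady solution (v, T, q) of the perturbation primitive equations on the
strip ℝ × [0, H], periodic in x with period L:

v ∂ₓv − (∫₀^z ∂ₓv dξ) ∂_z v
    = ν_x ∂ₓ²v + ν_z ∂_z²v − g ρ₀ β ∂ₓ(∫₀^z T dξ) − ∂ₓq,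
v ∂ₓT − (∫₀^z ∂ₓv dξ) ∂_z T
    = κ_x ∂ₓ²T + κ_z ∂_z²T + ((T₁ − T₀)/H) ∫₀^z ∂ₓv dξ,

with boundary conditions ∂_z v = 0 at z = 0, H; T = 0 at z = 0, H; and
∫₀^H v dz = 0. -/
structure SteadySolution (νx νz κx κz g ρ₀ β H L T₀ T₁ : ℝ)
    (v T : ℝ → ℝ → ℝ) (q : ℝ → ℝ) : Prop where
  smooth_v : ContDiff ℝ (⊤ : ℕ∞) (fun p : ℝ × ℝ => v p.1 p.2)
  smooth_T : ContDiff ℝ (⊤ : ℕ∞) (fun p : ℝ × ℝ => T p.1 p.2)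
  smooth_q : ContDiff ℝ (⊤ : ℕ∞) q
  periodic_v : ∀ x z, v (x + L) z = v x z
  periodic_T : ∀ x z, T (x + L) z = T x z
  periodic_q : ∀ x, q (x + L) = q x
  momentum : ∀ (x : ℝ), ∀ z ∈ Set.Icc (0:ℝ) H,
    v x z * px2 v x z - (∫ ξ in (0:ℝ)..z, px2 v x ξ) * pz2 v x z
      = νx * px2 (px2 v) x z + νz * pz2 (pz2 v) x z
        - g * ρ₀ * β * px2 (fun x z => ∫ ξ in (0:ℝ)..z, T x ξ) x z
        - deriv q x
  heat : ∀ (x : ℝ), ∀ z ∈ Set.Icc (0:ℝ) H,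
    v x z * px2 T x z - (∫ ξ in (0:ℝ)..z, px2 v x ξ) * pz2 T x z
      = κx * px2 (px2 T) x z + κz * pz2 (pz2 T) x z
        + ((T₁ - T₀) / H) * ∫ ξ in (0:ℝ)..z, px2 v x ξ
  bc_v0 : ∀ x : ℝ, pz2 v x 0 = 0
  bc_vH : ∀ x : ℝ, pz2 v x H = 0
  bc_T0 : ∀ x : ℝ, T x 0 = 0
  bc_TH : ∀ x : ℝ, T x H = 0
  mean_v : ∀ x : ℝ, (∫ z in (0:ℝ)..H, v x z) = 0


open Function MeasureTheory Set intervalIntegral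
open scoped ContDiff

section PartialDerivatives

variable {f : ℝ → ℝ → ℝ} {x z : ℝ}

theorem hasDerivAt_px2 (hf : DifferentiableAt ℝ (uncurry f) (x, z)) :
    HasDerivAt (f · z) (px2 f x z) x :=
  (DifferentiableAt.comp (g := uncurry f) (f := (·, z)) x hf
    (differentiableAt_id.prodMk (differentiableAt_const z))).hasDerivAt

theorem hasDerivAt_pz2 (hf : DifferentiableAt ℝ (uncurry f) (x, z)) :
    HasDerivAt (f x) (pz2 f x z) z :=
  (DifferentiableAt.comp (g := uncurry f) (f := (x, ·)) z hf
    ((differentiableAt_const x).prodMk differentiableAt_id)).hasDerivAt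

theorem px2_eq_fderiv (hf : DifferentiableAt ℝ (uncurry f) (x, z)) :
    px2 f x z = fderiv ℝ (uncurry f) (x, z) (1, 0) :=
  (HasFDerivAt.comp_hasDerivAt (l := uncurry f) x hf.hasFDerivAt
    ((hasDerivAt_id x).prodMk (hasDerivAt_const x z))).deriv

theorem pz2_eq_fderiv (hf : DifferentiableAt ℝ (uncurry f) (x, z)) :
    pz2 f x z = fderiv ℝ (uncurry f) (x, z) (0, 1) :=
  (HasFDerivAt.comp_hasDerivAt (l := uncurry f) z hf.hasFDerivAt
    ((hasDerivAt_const z x).prodMk (hasDerivAt_id z))).deriv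

theorem contDiff_px2 {m n : WithTop ℕ∞} (hf : ContDiff ℝ n (uncurry f)) (hmn : m + 1 ≤ n) :
    ContDiff ℝ m (uncurry (px2 f)) := by
  have hd : Differentiable ℝ (uncurry f) := hf.differentiable (by aesop)
  convert (hf.fderiv_right hmn).clm_apply contDiff_const using 1
  exact funext fun p => px2_eq_fderiv (hd p)

theorem contDiff_pz2 {m n : WithTop ℕ∞} (hf : ContDiff ℝ n (uncurry f)) (hmn : m + 1 ≤ n) :
    ContDiff ℝ m (uncurry (pz2 f)) := by
  have hd : Differentiable ℝ (uncurry f) := hf.differentiable (by aesop)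
  convert (hf.fderiv_right hmn).clm_apply contDiff_const using 1
  exact funext fun p => pz2_eq_fderiv (hd p)

theorem px2_add_period {L : ℝ} (h : ∀ x z, f (x + L) z = f x z) (x z : ℝ) :
    px2 f (x + L) z = px2 f x z := by
  simp only [px2, ← deriv_comp_add_const, h]

theorem eq_of_pz2_eqOn_zero {c d : ℝ} (hf : Differentiable ℝ (uncurry f))
    (h : EqOn (pz2 f x) 0 (Icc c d)) : ∀ z ∈ Icc c d, f x z = f x c :=
  constant_of_has_deriv_right_zero
    (fun z _ => (hasDerivAt_pz2 (hf (x, z))).continuousAt.continuousWithinAt)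
    fun z hz =>
      ((hasDerivAt_pz2 (hf (x, z))).congr_deriv (h (Ico_subset_Icc_self hz))).hasDerivWithinAt

end PartialDerivatives

theorem hasDerivAt_intervalIntegral_of_continuous {f g : ℝ → ℝ → ℝ}
    (hf : Continuous (uncurry f)) (hg : Continuous (uncurry g))
    (hfg : ∀ x z, HasDerivAt (f · z) (g x z) x) (c d x₀ : ℝ) :
    HasDerivAt (fun x => ∫ z in c..d, f x z) (∫ z in c..d, g x₀ z) x₀ := by
  obtain ⟨C, hC⟩ : ∃ C, ∀ p ∈ Metric.closedBall x₀ 1 ×ˢ uIcc c d, ‖uncurry g p‖ ≤ C :=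
    ((isCompact_closedBall x₀ 1).prod isCompact_uIcc).exists_bound_of_continuousOn
      hg.continuousOn
  refine (hasDerivAt_integral_of_dominated_loc_of_deriv_le (bound := fun _ => C)
    (Metric.ball_mem_nhds x₀ one_pos)
    (.of_forall fun x => (hf.comp (.prodMk_right x)).aestronglyMeasurable)
    ((hf.comp (.prodMk_right x₀)).intervalIntegrable c d)
    (hg.comp (.prodMk_right x₀)).aestronglyMeasurable
    (.of_forall fun z hz x hx =>
      hC (x, z) ⟨Metric.ball_subset_closedBall hx, uIoc_subset_uIcc hz⟩)
    intervalIntegrable_const (.of_forall fun z _ x _ => hfg x z)).2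

section VerticalPrimitive

def primZ (f : ℝ → ℝ → ℝ) (x z : ℝ) : ℝ := ∫ ξ in (0:ℝ)..z, f x ξ

variable {f : ℝ → ℝ → ℝ}

@[simp]
theorem primZ_zero (x : ℝ) : primZ f x 0 = 0 :=
  integral_same

theorem continuous_primZ (hf : Continuous (uncurry f)) : Continuous (uncurry (primZ f)) :=
  continuous_parametric_primitive_of_continuous hf

theorem hasDerivAt_primZ (hf : Continuous (uncurry f)) (x z : ℝ) :
    HasDerivAt (primZ f x) (f x z) z :=
  ((hf.comp (.prodMk_right x)).integral_hasStrictDerivAt 0 z).hasDerivAt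

theorem hasDerivAt_primZ_px2 (hf : ContDiff ℝ 1 (uncurry f)) (x z : ℝ) :
    HasDerivAt (primZ f · z) (primZ (px2 f) x z) x :=
  hasDerivAt_intervalIntegral_of_continuous hf.continuous
    (contDiff_px2 (m := 0) hf (by simp)).continuous
    (fun x z => hasDerivAt_px2 (hf.differentiable one_ne_zero _)) 0 z x

theorem px2_primZ (hf : ContDiff ℝ 1 (uncurry f)) (x z : ℝ) :
    px2 (primZ f) x z = primZ (px2 f) x z :=
  (hasDerivAt_primZ_px2 hf x z).deriv

theorem primZ_add_period {L : ℝ} (h : ∀ x z, f (x + L) z = f x z) (x z : ℝ) :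
    primZ f (x + L) z = primZ f x z := by
  simp only [primZ, h]

end VerticalPrimitive

theorem eqOn_zero_of_intervalIntegral_eq_zero {f : ℝ → ℝ} {a b : ℝ} (hab : a < b)
    (hf : ContinuousOn f (Icc a b)) (hnn : ∀ x ∈ Icc a b, 0 ≤ f x)
    (h : ∫ x in a..b, f x = 0) : EqOn f 0 (Icc a b) := by
  intro x hx
  by_contra hne
  have hlt := integral_lt_integral_of_continuousOn_of_le_of_exists_lt hab continuousOn_const hf
    (fun y hy => hnn y (Ioc_subset_Icc_self hy)) ⟨x, hx, (hnn x hx).lt_of_ne' hne⟩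
  simp [h] at hlt

theorem eqOn_zero_of_integral_integral_eq_zero {f : ℝ → ℝ → ℝ} {a b c d : ℝ} (hab : a < b)
    (hcd : c < d) (hf : Continuous (uncurry f)) (hnn : ∀ x z, 0 ≤ f x z)
    (h : ∫ x in a..b, ∫ z in c..d, f x z = 0) : ∀ x ∈ Icc a b, EqOn (f x) 0 (Icc c d) :=
  fun x hx => eqOn_zero_of_intervalIntegral_eq_zero hcd (hf.comp (.prodMk_right x)).continuousOn
    (fun z _ => hnn x z) <| eqOn_zero_of_intervalIntegral_eq_zero hab
      (continuous_parametric_intervalIntegral_of_continuous' hf c d).continuousOn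
      (fun x _ => integral_nonneg hcd.le fun z _ => hnn x z) h hx

def IsPeriodicDivergence (L c d : ℝ) (F : ℝ → ℝ → ℝ) : Prop :=
  ∃ P P' Q Q' : ℝ → ℝ → ℝ,
    (∀ x z, HasDerivAt (P · z) (P' x z) x) ∧ (∀ x z, HasDerivAt (Q x) (Q' x z) z) ∧
    Continuous (uncurry P') ∧ Continuous (uncurry Q') ∧
    (∀ x z, P (x + L) z = P x z) ∧ (∀ x, Q x c = Q x d) ∧
    ∀ x, ∀ z ∈ Icc c d, F x z = P' x z + Q' x z

namespace IsPeriodicDivergence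

variable {L c d : ℝ} {F G : ℝ → ℝ → ℝ}

theorem integral_eq_zero (hF : IsPeriodicDivergence L c d F) (hcd : c ≤ d) (a : ℝ) :
    ∫ x in a..a + L, ∫ z in c..d, F x z = 0 := by
  obtain ⟨P, P', Q, Q', hP, hQ, hP', hQ', hPL, hQcd, hFPQ⟩ := hF
  have hsection (R : ℝ → ℝ → ℝ) (hR : Continuous (uncurry R)) (x : ℝ) :
      IntervalIntegrable (R x) volume c d :=
    (hR.comp (.prodMk_right x)).intervalIntegrable c d
  have hinner (x : ℝ) : ∫ z in c..d, F x z = ∫ z in c..d, P' x z := by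
    rw [integral_congr fun z hz => hFPQ x z (by rwa [uIcc_of_le hcd] at hz),
      integral_add (hsection P' hP' x) (hsection Q' hQ' x),
      integral_eq_sub_of_hasDerivAt (fun z _ => hQ x z) (hsection Q' hQ' x), hQcd, sub_self,
      add_zero]
  calc ∫ x in a..a + L, ∫ z in c..d, F x z
      = ∫ x in a..a + L, ∫ z in c..d, P' x z := integral_congr fun x _ => hinner x
    _ = ∫ z in c..d, ∫ x in a..a + L, P' x z :=
      intervalIntegral_intervalIntegral_swap
        ((hP'.continuousOn.integrableOn_compact (isCompact_uIcc.prod isCompact_uIcc)).mono_set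
          (prod_mono uIoc_subset_uIcc uIoc_subset_uIcc))
    _ = ∫ z in c..d, (P (a + L) z - P a z) := integral_congr fun z _ =>
      integral_eq_sub_of_hasDerivAt (fun x _ => hP x z)
        ((hP'.comp (.prodMk_left z)).intervalIntegrable _ _)
    _ = 0 := by simp only [hPL, sub_self, intervalIntegral.integral_zero]

theorem add (hF : IsPeriodicDivergence L c d F) (hG : IsPeriodicDivergence L c d G) :
    IsPeriodicDivergence L c d fun x z => F x z + G x z := by
  obtain ⟨P, P', Q, Q', hP, hQ, hP', hQ', hPL, hQcd, hFPQ⟩ := hF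
  obtain ⟨R, R', S, S', hR, hS, hR', hS', hRL, hScd, hGRS⟩ := hG
  refine ⟨P + R, P' + R', Q + S, Q' + S', fun x z => (hP x z).add (hR x z),
    fun x z => (hQ x z).add (hS x z), hP'.add hR', hQ'.add hS', fun x z => ?_, fun x => ?_,
    fun x z hz => ?_⟩
  · simp only [Pi.add_apply, hPL, hRL]
  · simp only [Pi.add_apply, hQcd, hScd]
  · simp only [Pi.add_apply, hFPQ x z hz, hGRS x z hz]
    ring

theorem const_mul (hF : IsPeriodicDivergence L c d F) (r : ℝ) :
    IsPeriodicDivergence L c d fun x z => r * F x z := by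
  obtain ⟨P, P', Q, Q', hP, hQ, hP', hQ', hPL, hQcd, hFPQ⟩ := hF
  refine ⟨fun x z => r * P x z, fun x z => r * P' x z, fun x z => r * Q x z,
    fun x z => r * Q' x z, fun x z => (hP x z).const_mul r, fun x z => (hQ x z).const_mul r,
    by fun_prop, by fun_prop, fun x z => by simp only [hPL], fun x => by simp only [hQcd],
    fun x z hz => by simp only [hFPQ x z hz]; ring⟩

theorem congr (hF : IsPeriodicDivergence L c d F) (hFG : ∀ x, ∀ z ∈ Icc c d, F x z = G x z) :
    IsPeriodicDivergence L c d G := by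
  obtain ⟨P, P', Q, Q', hP, hQ, hP', hQ', hPL, hQcd, hFPQ⟩ := hF
  exact ⟨P, P', Q, Q', hP, hQ, hP', hQ', hPL, hQcd,
    fun x z hz => (hFG x z hz).symm.trans (hFPQ x z hz)⟩

theorem eq_zero (hF : IsPeriodicDivergence L c d F) (hL : 0 < L) (hcd : c < d)
    (hFc : Continuous (uncurry F)) (hnn : ∀ x z, 0 ≤ F x z) : ∀ x, ∀ z ∈ Icc c d, F x z = 0 :=
  fun x => eqOn_zero_of_integral_integral_eq_zero (lt_add_of_pos_right x hL) hcd hFc hnn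
    (hF.integral_eq_zero hcd.le x) x (left_mem_Icc.2 (le_add_of_nonneg_right hL.le))

end IsPeriodicDivergence

namespace SteadySolution

variable {νx νz κx κz g ρ₀ β H L T₀ T₁ : ℝ} {v T : ℝ → ℝ → ℝ} {q : ℝ → ℝ}

theorem primZ_px2_v_top (hsol : SteadySolution νx νz κx κz g ρ₀ β H L T₀ T₁ v T q) (x : ℝ) :
    primZ (px2 v) x H = 0 := by
  have hV : (primZ v · H) = fun _ => 0 := funext hsol.mean_v
  have hW := hasDerivAt_primZ_px2 (hsol.smooth_v.of_le (by simp)) x H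
  rw [hV] at hW
  exact hW.unique (hasDerivAt_const x 0)

theorem momentum_primZ (hsol : SteadySolution νx νz κx κz g ρ₀ β H L T₀ T₁ v T q) :
    ∀ x, ∀ z ∈ Icc 0 H, v x z * px2 v x z - primZ (px2 v) x z * pz2 v x z
      = νx * px2 (px2 v) x z + νz * pz2 (pz2 v) x z - g * ρ₀ * β * primZ (px2 T) x z
        - deriv q x := by
  intro x z hz
  rw [← px2_primZ (hsol.smooth_T.of_le (by simp))]
  exact hsol.momentum x z hz

theorem isPeriodicDivergence_momentumEnergy
    (hsol : SteadySolution νx νz κx κz g ρ₀ β H L T₀ T₁ v T q) :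
    IsPeriodicDivergence L 0 H fun x z =>
      νx * px2 v x z ^ 2 + νz * pz2 v x z ^ 2 - g * ρ₀ * β * (px2 v x z * primZ T x z) := by
  have hv : ContDiff ℝ ∞ (uncurry v) := hsol.smooth_v
  have hT : ContDiff ℝ ∞ (uncurry T) := hsol.smooth_T
  have hvx := contDiff_px2 (m := ∞) hv (by simp)
  have hvz := contDiff_pz2 (m := ∞) hv (by simp)
  have hvxx := (contDiff_px2 hvx (m := 0) (by simp)).continuous
  have hvzz := (contDiff_pz2 hvz (m := 0) (by simp)).continuous
  have hTx := contDiff_px2 hT (m := 0) (by simp)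
  have hq' : Continuous (deriv q) := hsol.smooth_q.continuous_deriv (by simp)
  have hG := continuous_primZ hT.continuous
  have hGx := continuous_primZ hTx.continuous
  have hW := continuous_primZ hvx.continuous
  have hV := continuous_primZ hv.continuous
  -- `-v³/2` accounts for `v² ∂ₓv` and for the `∂ₓ(v³/6)` produced by `∂_z(W v²/2)`.
  refine ⟨fun x z => νx * (v x z * px2 v x z) - g * ρ₀ * β * (v x z * primZ T x z)
      - v x z ^ 3 / 2,
    fun x z => νx * (px2 v x z ^ 2 + v x z * px2 (px2 v) x z)
      - g * ρ₀ * β * (px2 v x z * primZ T x z + v x z * primZ (px2 T) x z)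
      - 3 / 2 * v x z ^ 2 * px2 v x z,
    fun x z => νz * (v x z * pz2 v x z) + primZ (px2 v) x z * v x z ^ 2 / 2
      - deriv q x * primZ v x z,
    fun x z => νz * (pz2 v x z ^ 2 + v x z * pz2 (pz2 v) x z) + px2 v x z * v x z ^ 2 / 2
      + primZ (px2 v) x z * (v x z * pz2 v x z) - deriv q x * v x z,
    fun x z => ?_, fun x z => ?_, by fun_prop, by fun_prop, fun x z => ?_, fun x => ?_,
    fun x z hz => ?_⟩
  · have dv := hasDerivAt_px2 (hv.differentiable (by simp) (x, z))
    have dvx := hasDerivAt_px2 (hvx.differentiable (by simp) (x, z))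
    have dG := hasDerivAt_primZ_px2 (hT.of_le (by simp)) x z
    refine ((((dv.mul dvx).const_mul νx).sub ((dv.mul dG).const_mul (g * ρ₀ * β))).sub
      ((dv.pow 3).div_const 2)).congr_deriv ?_
    ring
  · have dv := hasDerivAt_pz2 (hv.differentiable (by simp) (x, z))
    have dvz := hasDerivAt_pz2 (hvz.differentiable (by simp) (x, z))
    have dW := hasDerivAt_primZ hvx.continuous x z
    have dV := hasDerivAt_primZ hv.continuous x z
    refine ((((dv.mul dvz).const_mul νz).add ((dW.mul (dv.pow 2)).div_const 2)).sub
      (dV.const_mul (deriv q x))).congr_deriv ?_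
    simp only [Pi.pow_apply]
    ring
  · simp only [hsol.periodic_v, px2_add_period hsol.periodic_v, primZ_add_period hsol.periodic_T]
  · have hV : primZ v x H = 0 := hsol.mean_v x
    simp only [hsol.bc_v0, hsol.bc_vH, hsol.primZ_px2_v_top, hV, primZ_zero]
    ring
  · linear_combination (v x z) * hsol.momentum_primZ x z hz

theorem isPeriodicDivergence_heatEnergy
    (hsol : SteadySolution νx νz κx κz g ρ₀ β H L T₀ T₁ v T q) :
    IsPeriodicDivergence L 0 H fun x z =>
      κx * px2 T x z ^ 2 + κz * pz2 T x z ^ 2 + (T₁ - T₀) / H * (px2 v x z * primZ T x z) := by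
  have hv : ContDiff ℝ ∞ (uncurry v) := hsol.smooth_v
  have hT : ContDiff ℝ ∞ (uncurry T) := hsol.smooth_T
  have hvx := contDiff_px2 (m := ∞) hv (by simp)
  have hTx := contDiff_px2 (m := ∞) hT (by simp)
  have hTz := contDiff_pz2 (m := ∞) hT (by simp)
  have hTxx := (contDiff_px2 hTx (m := 0) (by simp)).continuous
  have hTzz := (contDiff_pz2 hTz (m := 0) (by simp)).continuous
  have hG := continuous_primZ hT.continuous
  have hW := continuous_primZ hvx.continuous
  refine ⟨fun x z => κx * (T x z * px2 T x z) - v x z * T x z ^ 2 / 2,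
    fun x z => κx * (px2 T x z ^ 2 + T x z * px2 (px2 T) x z) - px2 v x z * T x z ^ 2 / 2
      - v x z * (T x z * px2 T x z),
    fun x z => κz * (T x z * pz2 T x z) + primZ (px2 v) x z * T x z ^ 2 / 2
      + (T₁ - T₀) / H * (primZ (px2 v) x z * primZ T x z),
    fun x z => κz * (pz2 T x z ^ 2 + T x z * pz2 (pz2 T) x z) + px2 v x z * T x z ^ 2 / 2
      + primZ (px2 v) x z * (T x z * pz2 T x z)
      + (T₁ - T₀) / H * (px2 v x z * primZ T x z + primZ (px2 v) x z * T x z),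
    fun x z => ?_, fun x z => ?_, by fun_prop, by fun_prop, fun x z => ?_, fun x => ?_,
    fun x z hz => ?_⟩
  · have dv := hasDerivAt_px2 (hv.differentiable (by simp) (x, z))
    have dT := hasDerivAt_px2 (hT.differentiable (by simp) (x, z))
    have dTx := hasDerivAt_px2 (hTx.differentiable (by simp) (x, z))
    refine (((dT.mul dTx).const_mul κx).sub ((dv.mul (dT.pow 2)).div_const 2)).congr_deriv ?_
    simp only [Pi.pow_apply]
    ring
  · have dT := hasDerivAt_pz2 (hT.differentiable (by simp) (x, z))
    have dTz := hasDerivAt_pz2 (hTz.differentiable (by simp) (x, z))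
    have dW := hasDerivAt_primZ hvx.continuous x z
    have dG := hasDerivAt_primZ hT.continuous x z
    refine ((((dT.mul dTz).const_mul κz).add ((dW.mul (dT.pow 2)).div_const 2)).add
      ((dW.mul dG).const_mul ((T₁ - T₀) / H))).congr_deriv ?_
    simp only [Pi.pow_apply]
    ring
  · simp only [hsol.periodic_v, hsol.periodic_T, px2_add_period hsol.periodic_T]
  · simp only [hsol.bc_T0, hsol.bc_TH, hsol.primZ_px2_v_top, primZ_zero]
    ring
  · have hh : v x z * px2 T x z - primZ (px2 v) x z * pz2 T x z
        = κx * px2 (px2 T) x z + κz * pz2 (pz2 T) x z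
          + (T₁ - T₀) / H * primZ (px2 v) x z := hsol.heat x z hz
    linear_combination (T x z) * hh

theorem temperature_eq_zero (hsol : SteadySolution νx νz κx κz g ρ₀ β H L T₀ T₁ v T q)
    (hνx : 0 ≤ νx) (hνz : 0 ≤ νz) (hκx : 0 ≤ κx) (hκz : 0 < κz) (hk : 0 < g * ρ₀ * β)
    (hH : 0 < H) (hL : 0 < L) (hT : T₀ ≤ T₁) : ∀ x, ∀ z ∈ Icc 0 H, T x z = 0 := by
  set c := (T₁ - T₀) / H
  set k := g * ρ₀ * β
  have hc : 0 ≤ c := div_nonneg (sub_nonneg.2 hT) hH.le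
  have hdiss := ((hsol.isPeriodicDivergence_momentumEnergy.const_mul c).add
    (hsol.isPeriodicDivergence_heatEnergy.const_mul k)).congr
    (G := fun x z => c * νx * px2 v x z ^ 2 + c * νz * pz2 v x z ^ 2
      + k * κx * px2 T x z ^ 2 + k * κz * pz2 T x z ^ 2) fun x z _ => by ring
  have hvx := contDiff_px2 (m := 0) hsol.smooth_v (by simp)
  have hvz := contDiff_pz2 (m := 0) hsol.smooth_v (by simp)
  have hTx := contDiff_px2 (m := 0) hsol.smooth_T (by simp)
  have hTz := contDiff_pz2 (m := 0) hsol.smooth_T (by simp)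
  have hzero := hdiss.eq_zero hL hH (by fun_prop) fun x z => by positivity
  intro x z hz
  have hTz0 : EqOn (pz2 T x) 0 (Icc 0 H) := fun w hw => by
    have h := (add_eq_zero_iff_of_nonneg (by positivity) (by positivity)).1 (hzero x w hw)
    simpa [hk.ne', hκz.ne'] using h.2
  rw [eq_of_pz2_eqOn_zero (hsol.smooth_T.differentiable (by simp)) hTz0 z hz, hsol.bc_T0]

theorem velocity_eq_zero (hsol : SteadySolution νx νz κx κz g ρ₀ β H L T₀ T₁ v T q)
    (hνx : 0 ≤ νx) (hνz : 0 < νz) (hH : 0 < H) (hL : 0 < L)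
    (hT0 : ∀ x, ∀ z ∈ Icc 0 H, T x z = 0) : ∀ x, ∀ z ∈ Icc 0 H, v x z = 0 := by
  have hG (x z : ℝ) (hz : z ∈ Icc 0 H) : primZ T x z = 0 := by
    refine (integral_congr fun ξ hξ => hT0 x ξ ?_).trans intervalIntegral.integral_zero
    rw [uIcc_of_le hz.1] at hξ
    exact ⟨hξ.1, hξ.2.trans hz.2⟩
  have hdiss := hsol.isPeriodicDivergence_momentumEnergy.congr
    (G := fun x z => νx * px2 v x z ^ 2 + νz * pz2 v x z ^ 2) fun x z hz => by
      rw [hG x z hz]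
      ring
  have hvx := contDiff_px2 (m := 0) hsol.smooth_v (by simp)
  have hvz := contDiff_pz2 (m := 0) hsol.smooth_v (by simp)
  have hzero := hdiss.eq_zero hL hH (by fun_prop) fun x z => by positivity
  intro x z hz
  have hvz0 : EqOn (pz2 v x) 0 (Icc 0 H) := fun w hw => by
    have h := (add_eq_zero_iff_of_nonneg (by positivity) (by positivity)).1 (hzero x w hw)
    simpa [hνz.ne'] using h.2
  have hcol := eq_of_pz2_eqOn_zero (hsol.smooth_v.differentiable (by simp)) hvz0
  have hbottom : v x 0 = 0 := by
    have hmean := hsol.mean_v x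
    rw [integral_congr fun w hw => hcol w (by rwa [uIcc_of_le hH.le] at hw),
      intervalIntegral.integral_const, smul_eq_mul] at hmean
    simpa [hH.ne'] using hmean
  rw [hcol z hz, hbottom]

end SteadySolution

/-- Characterization of steady states in the stable case T₁ ≥ T₀:
every smooth steady solution of the perturbation primitive equations vanishes
identically on Ω. -/
theorem steady_states_stable_case
    (νx νz κx κz g ρ₀ β H L T₀ T₁ : ℝ)
    (hνx : 0 < νx) (hνz : 0 < νz) (hκx : 0 < κx) (hκz : 0 < κz)
    (hg : 0 < g) (hρ₀ : 0 < ρ₀) (hβ : 0 < β) (hH : 0 < H) (hL : 0 < L)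
    (hT : T₀ ≤ T₁)
    (v T : ℝ → ℝ → ℝ) (q : ℝ → ℝ)
    (hsol : SteadySolution νx νz κx κz g ρ₀ β H L T₀ T₁ v T q) :
    ∀ (x : ℝ), ∀ z ∈ Set.Icc (0:ℝ) H, v x z = 0 ∧ T x z = 0 := by
  have hT0 := hsol.temperature_eq_zero hνx.le hνz.le hκx.le hκz (by positivity) hH hL hT
  exact fun x z hz => ⟨hsol.velocity_eq_zero hνx.le hνz hH hL hT0 x z hz, hT0 x z hz⟩
end
end

section
/- Energy identity for steady states, unstable case: Suppose T₁ < T₀. Then every smooth steady solution (v, T, q) of the perturbation primitive equations satisfies the identity g ρ₀ β H (κ_x ∫_Ω |∂_x T|² dx dz + κ_z ∫_Ω |∂_z T|² dx dz) = (T₀ − T₁) (ν_x ∫_Ω |∂_x v|² dx dz + ν_z ∫_Ω |∂_z v|² dx dz). -/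
noncomputable section

open Real

set_option maxHeartbeats 1000000

section Helpers

open MeasureTheory intervalIntegral

variable {f G G' : ℝ → ℝ → ℝ}

lemma contRight (h : Continuous fun p : ℝ × ℝ => G p.1 p.2) (x : ℝ) :
    Continuous fun z => G x z := h.comp (Continuous.prodMk_right x)

lemma contLeft (h : Continuous fun p : ℝ × ℝ => G p.1 p.2) (z : ℝ) :
    Continuous fun x => G x z := h.comp (continuous_id.prodMk continuous_const)

/-- Differentiation under the interval integral sign, continuous-derivative version. -/
lemma param_hasDerivAt (hG : Continuous fun p : ℝ × ℝ => G p.1 p.2)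
    (hG' : Continuous fun p : ℝ × ℝ => G' p.1 p.2)
    (hder : ∀ x t, HasDerivAt (fun y => G y t) (G' x t) x) (a b x₀ : ℝ) :
    HasDerivAt (fun x => ∫ t in a..b, G x t) (∫ t in a..b, G' x₀ t) x₀ := by
  obtain ⟨C, hC⟩ := ((isCompact_closedBall x₀ 1).prod (isCompact_uIcc (a := a) (b := b))).exists_bound_of_continuousOn
    hG'.continuousOn
  refine (intervalIntegral.hasDerivAt_integral_of_dominated_loc_of_deriv_le
      (F := G) (F' := G') (bound := fun _ => C) (Metric.ball_mem_nhds x₀ one_pos) ?_ ?_ ?_ ?_ ?_ ?_).2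
  · exact Filter.Eventually.of_forall fun x => (contRight hG x).aestronglyMeasurable
  · exact (contRight hG x₀).intervalIntegrable a b
  · exact (contRight hG' x₀).aestronglyMeasurable
  · refine Filter.Eventually.of_forall fun t ht x hx => ?_
    exact hC (x, t) ⟨Metric.ball_subset_closedBall hx, Set.uIoc_subset_uIcc ht⟩
  · exact intervalIntegrable_const
  · exact Filter.Eventually.of_forall fun t _ x _ => hder x t

lemma param_cont (hG : Continuous fun p : ℝ × ℝ => G p.1 p.2) (a b : ℝ) :
    Continuous fun x => ∫ t in a..b, G x t :=
  intervalIntegral.continuous_parametric_intervalIntegral_of_continuous' (f := G) hG a b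

lemma prim_cont (hG : Continuous fun p : ℝ × ℝ => G p.1 p.2) :
    Continuous fun p : ℝ × ℝ => ∫ t in (0:ℝ)..p.2, G p.1 t :=
  intervalIntegral.continuous_parametric_primitive_of_continuous (f := G) hG

lemma prim_hasDerivAt {g : ℝ → ℝ} (hg : Continuous g) (z : ℝ) :
    HasDerivAt (fun u => ∫ t in (0:ℝ)..u, g t) (g z) z :=
  intervalIntegral.integral_hasDerivAt_right (hg.intervalIntegrable _ _)
    (hg.stronglyMeasurableAtFilter _ _) hg.continuousAt

lemma hasDerivAt_px2_s1 (hf : ContDiff ℝ (⊤ : ℕ∞) fun p : ℝ × ℝ => f p.1 p.2) (x z : ℝ) :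
    HasDerivAt (fun y => f y z) (px2 f x z) x := by
  have h : DifferentiableAt ℝ (fun y => f y z) x :=
    (hf.differentiable (by norm_num) (x, z)).comp (f := fun y : ℝ => (y, z)) x (differentiableAt_id.prodMk (differentiableAt_const z))
  exact h.hasDerivAt

lemma hasDerivAt_pz2_s1 (hf : ContDiff ℝ (⊤ : ℕ∞) fun p : ℝ × ℝ => f p.1 p.2) (x z : ℝ) :
    HasDerivAt (fun w => f x w) (pz2 f x z) z := by
  have h : DifferentiableAt ℝ (fun w => f x w) z :=
    (hf.differentiable (by norm_num) (x, z)).comp z ((differentiableAt_const x).prodMk differentiableAt_id)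
  exact h.hasDerivAt

lemma px2_eq_fderiv_s1 (hf : ContDiff ℝ (⊤ : ℕ∞) fun p : ℝ × ℝ => f p.1 p.2) (x z : ℝ) :
    px2 f x z = fderiv ℝ (fun p : ℝ × ℝ => f p.1 p.2) (x, z) (1, 0) := by
  have hF : HasFDerivAt (fun p : ℝ × ℝ => f p.1 p.2)
      (fderiv ℝ (fun p : ℝ × ℝ => f p.1 p.2) (x, z)) (x, z) :=
    (hf.differentiable (by norm_num) (x, z)).hasFDerivAt
  have hg : HasDerivAt (fun y : ℝ => ((y, z) : ℝ × ℝ)) ((1 : ℝ), (0 : ℝ)) x :=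
    (hasDerivAt_id x).prodMk (hasDerivAt_const x z)
  have h2 : HasDerivAt (fun y => f y z)
      (fderiv ℝ (fun p : ℝ × ℝ => f p.1 p.2) (x, z) (1, 0)) x := by have := hF.comp_hasDerivAt x hg; exact this
  exact h2.deriv

lemma pz2_eq_fderiv_s1 (hf : ContDiff ℝ (⊤ : ℕ∞) fun p : ℝ × ℝ => f p.1 p.2) (x z : ℝ) :
    pz2 f x z = fderiv ℝ (fun p : ℝ × ℝ => f p.1 p.2) (x, z) (0, 1) := by
  have hF : HasFDerivAt (fun p : ℝ × ℝ => f p.1 p.2)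
      (fderiv ℝ (fun p : ℝ × ℝ => f p.1 p.2) (x, z)) (x, z) :=
    (hf.differentiable (by norm_num) (x, z)).hasFDerivAt
  have hg : HasDerivAt (fun w : ℝ => ((x, w) : ℝ × ℝ)) ((0 : ℝ), (1 : ℝ)) z :=
    (hasDerivAt_const z x).prodMk (hasDerivAt_id z)
  have h2 : HasDerivAt (fun w => f x w)
      (fderiv ℝ (fun p : ℝ × ℝ => f p.1 p.2) (x, z) (0, 1)) z := hF.comp_hasDerivAt z hg
  exact h2.deriv

lemma contDiff_px2_s1 (hf : ContDiff ℝ (⊤ : ℕ∞) fun p : ℝ × ℝ => f p.1 p.2) :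
    ContDiff ℝ (⊤ : ℕ∞) fun p : ℝ × ℝ => px2 f p.1 p.2 := by
  have h : ContDiff ℝ (⊤ : ℕ∞) fun p : ℝ × ℝ =>
      fderiv ℝ (fun p : ℝ × ℝ => f p.1 p.2) p ((1 : ℝ), (0 : ℝ)) :=
    (hf.fderiv_right (by norm_num)).clm_apply contDiff_const
  have he : (fun p : ℝ × ℝ => px2 f p.1 p.2)
      = fun p : ℝ × ℝ => fderiv ℝ (fun p : ℝ × ℝ => f p.1 p.2) p ((1 : ℝ), (0 : ℝ)) :=
    funext fun p => px2_eq_fderiv_s1 hf p.1 p.2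
  rw [he]; exact h

lemma contDiff_pz2_s1 (hf : ContDiff ℝ (⊤ : ℕ∞) fun p : ℝ × ℝ => f p.1 p.2) :
    ContDiff ℝ (⊤ : ℕ∞) fun p : ℝ × ℝ => pz2 f p.1 p.2 := by
  have h : ContDiff ℝ (⊤ : ℕ∞) fun p : ℝ × ℝ =>
      fderiv ℝ (fun p : ℝ × ℝ => f p.1 p.2) p ((0 : ℝ), (1 : ℝ)) :=
    (hf.fderiv_right (by norm_num)).clm_apply contDiff_const
  have he : (fun p : ℝ × ℝ => pz2 f p.1 p.2)
      = fun p : ℝ × ℝ => fderiv ℝ (fun p : ℝ × ℝ => f p.1 p.2) p ((0 : ℝ), (1 : ℝ)) :=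
    funext fun p => pz2_eq_fderiv_s1 hf p.1 p.2
  rw [he]; exact h

lemma px2_periodic {L : ℝ} (hper : ∀ x z, f (x + L) z = f x z) (x z : ℝ) :
    px2 f (x + L) z = px2 f x z := by
  have h1 : (fun y => f (y + L) z) = fun y => f y z := funext fun y => hper y z
  show deriv (fun y => f y z) (x + L) = deriv (fun y => f y z) x
  rw [← deriv_comp_add_const (fun y => f y z) L, h1]

lemma pz2_periodic {L : ℝ} (hper : ∀ x z, f (x + L) z = f x z) (x z : ℝ) :
    pz2 f (x + L) z = pz2 f x z := by
  show deriv (fun w => f (x + L) w) z = deriv (fun w => f x w) z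
  rw [show (fun w => f (x + L) w) = fun w => f x w from funext fun w => hper x w]

lemma integral_deriv_periodic {g g' : ℝ → ℝ} {L : ℝ}
    (h : ∀ x, HasDerivAt g (g' x) x) (hc : Continuous g') (hper : g L = g 0) :
    ∫ x in (0:ℝ)..L, g' x = 0 := by
  rw [intervalIntegral.integral_eq_sub_of_hasDerivAt (fun x _ => h x)
    (hc.intervalIntegrable 0 L), hper, sub_self]

lemma int_congr {f g : ℝ → ℝ} {a b : ℝ} (h : ∀ t, f t = g t) :
    ∫ t in a..b, f t = ∫ t in a..b, g t :=
  intervalIntegral.integral_congr fun t _ => h t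

lemma int_factor {f g : ℝ → ℝ} {a b : ℝ} (c : ℝ) (h : ∀ t, f t = c * g t) :
    ∫ t in a..b, f t = c * ∫ t in a..b, g t := by
  rw [← intervalIntegral.integral_const_mul]; exact int_congr h

lemma int_split2 {f f₁ f₂ : ℝ → ℝ} {a b : ℝ} (c₁ c₂ : ℝ)
    (h : ∀ t, f t = c₁ * f₁ t + c₂ * f₂ t) (h₁ : Continuous f₁) (h₂ : Continuous f₂) :
    ∫ t in a..b, f t = c₁ * (∫ t in a..b, f₁ t) + c₂ * (∫ t in a..b, f₂ t) := by
  rw [int_congr h,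
    intervalIntegral.integral_add ((continuous_const.fun_mul h₁).intervalIntegrable a b)
      ((continuous_const.fun_mul h₂).intervalIntegrable a b),
    intervalIntegral.integral_const_mul, intervalIntegral.integral_const_mul]

lemma int_split3 {f f₁ f₂ f₃ : ℝ → ℝ} {a b : ℝ} (c₁ c₂ c₃ : ℝ)
    (h : ∀ t, f t = c₁ * f₁ t + c₂ * f₂ t + c₃ * f₃ t)
    (h₁ : Continuous f₁) (h₂ : Continuous f₂) (h₃ : Continuous f₃) :
    ∫ t in a..b, f t = c₁ * (∫ t in a..b, f₁ t) + c₂ * (∫ t in a..b, f₂ t)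
      + c₃ * (∫ t in a..b, f₃ t) := by
  rw [int_congr h,
    intervalIntegral.integral_add (((continuous_const.fun_mul h₁).fun_add (continuous_const.fun_mul h₂)).intervalIntegrable a b)
      ((continuous_const.fun_mul h₃).intervalIntegrable a b),
    intervalIntegral.integral_add ((continuous_const.fun_mul h₁).intervalIntegrable a b)
      ((continuous_const.fun_mul h₂).intervalIntegrable a b),
    intervalIntegral.integral_const_mul, intervalIntegral.integral_const_mul,
    intervalIntegral.integral_const_mul]

lemma int_split4 {f f₁ f₂ f₃ f₄ : ℝ → ℝ} {a b : ℝ} (c₁ c₂ c₃ c₄ : ℝ)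
    (h : ∀ t, f t = c₁ * f₁ t + c₂ * f₂ t + c₃ * f₃ t + c₄ * f₄ t)
    (h₁ : Continuous f₁) (h₂ : Continuous f₂) (h₃ : Continuous f₃) (h₄ : Continuous f₄) :
    ∫ t in a..b, f t = c₁ * (∫ t in a..b, f₁ t) + c₂ * (∫ t in a..b, f₂ t)
      + c₃ * (∫ t in a..b, f₃ t) + c₄ * (∫ t in a..b, f₄ t) := by
  rw [int_congr h,
    intervalIntegral.integral_add
      ((((continuous_const.fun_mul h₁).fun_add (continuous_const.fun_mul h₂)).fun_add (continuous_const.fun_mul h₃)).intervalIntegrable a b)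
      ((continuous_const.fun_mul h₄).intervalIntegrable a b),
    intervalIntegral.integral_add (((continuous_const.fun_mul h₁).fun_add (continuous_const.fun_mul h₂)).intervalIntegrable a b)
      ((continuous_const.fun_mul h₃).intervalIntegrable a b),
    intervalIntegral.integral_add ((continuous_const.fun_mul h₁).intervalIntegrable a b)
      ((continuous_const.fun_mul h₂).intervalIntegrable a b),
    intervalIntegral.integral_const_mul, intervalIntegral.integral_const_mul,
    intervalIntegral.integral_const_mul, intervalIntegral.integral_const_mul]

lemma int_split5 {f f₁ f₂ f₃ f₄ f₅ : ℝ → ℝ} {a b : ℝ} (c₁ c₂ c₃ c₄ c₅ : ℝ)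
    (h : ∀ t, f t = c₁ * f₁ t + c₂ * f₂ t + c₃ * f₃ t + c₄ * f₄ t + c₅ * f₅ t)
    (h₁ : Continuous f₁) (h₂ : Continuous f₂) (h₃ : Continuous f₃) (h₄ : Continuous f₄)
    (h₅ : Continuous f₅) :
    ∫ t in a..b, f t = c₁ * (∫ t in a..b, f₁ t) + c₂ * (∫ t in a..b, f₂ t)
      + c₃ * (∫ t in a..b, f₃ t) + c₄ * (∫ t in a..b, f₄ t) + c₅ * (∫ t in a..b, f₅ t) := by
  rw [int_congr h,
    intervalIntegral.integral_add
      (((((continuous_const.fun_mul h₁).fun_add (continuous_const.fun_mul h₂)).fun_add (continuous_const.fun_mul h₃)).fun_add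
        (continuous_const.fun_mul h₄)).intervalIntegrable a b)
      ((continuous_const.fun_mul h₅).intervalIntegrable a b),
    intervalIntegral.integral_add
      ((((continuous_const.fun_mul h₁).fun_add (continuous_const.fun_mul h₂)).fun_add (continuous_const.fun_mul h₃)).intervalIntegrable a b)
      ((continuous_const.fun_mul h₄).intervalIntegrable a b),
    intervalIntegral.integral_add (((continuous_const.fun_mul h₁).fun_add (continuous_const.fun_mul h₂)).intervalIntegrable a b)
      ((continuous_const.fun_mul h₃).intervalIntegrable a b),
    intervalIntegral.integral_add ((continuous_const.fun_mul h₁).intervalIntegrable a b)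
      ((continuous_const.fun_mul h₂).intervalIntegrable a b),
    intervalIntegral.integral_const_mul, intervalIntegral.integral_const_mul,
    intervalIntegral.integral_const_mul, intervalIntegral.integral_const_mul,
    intervalIntegral.integral_const_mul]

end Helpers

/-- Energy identity for steady states in the unstable case T₁ < T₀:
g ρ₀ β H (κ_x ‖∂ₓT‖² + κ_z ‖∂_zT‖²) = (T₀ − T₁)(ν_x ‖∂ₓv‖² + ν_z ‖∂_zv‖²),
the squared L² norms being taken over Ω = (0, L) × (0, H). -/
theorem steady_states_energy_identity_unstable_case
    (νx νz κx κz g ρ₀ β H L T₀ T₁ : ℝ)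
    (hνx : 0 < νx) (hνz : 0 < νz) (hκx : 0 < κx) (hκz : 0 < κz)
    (hg : 0 < g) (hρ₀ : 0 < ρ₀) (hβ : 0 < β) (hH : 0 < H) (hL : 0 < L)
    (hT : T₁ < T₀)
    (v T : ℝ → ℝ → ℝ) (q : ℝ → ℝ)
    (hsol : SteadySolution νx νz κx κz g ρ₀ β H L T₀ T₁ v T q) :
    g * ρ₀ * β * H *
        (κx * (∫ x in (0:ℝ)..L, ∫ z in (0:ℝ)..H, (px2 T x z) ^ 2)
          + κz * (∫ x in (0:ℝ)..L, ∫ z in (0:ℝ)..H, (pz2 T x z) ^ 2))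
      = (T₀ - T₁) *
        (νx * (∫ x in (0:ℝ)..L, ∫ z in (0:ℝ)..H, (px2 v x z) ^ 2)
          + νz * (∫ x in (0:ℝ)..L, ∫ z in (0:ℝ)..H, (pz2 v x z) ^ 2)) := by
  
  obtain ⟨sv, sT, sq, pv, pT, pq, mom, heatx, bv0, bvH, bT0, bTH, mv⟩ := hsol
  -- smoothness of partial derivatives
  have svx := contDiff_px2_s1 sv
  have svz := contDiff_pz2_s1 sv
  have svxx := contDiff_px2_s1 svx
  have svzz := contDiff_pz2_s1 svz
  have sTx := contDiff_px2_s1 sT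
  have sTz := contDiff_pz2_s1 sT
  have sTxx := contDiff_px2_s1 sTx
  have sTzz := contDiff_pz2_s1 sTz
  -- joint continuity
  have cv : Continuous fun p : ℝ × ℝ => v p.1 p.2 := sv.continuous
  have cT : Continuous fun p : ℝ × ℝ => T p.1 p.2 := sT.continuous
  have cvx := svx.continuous
  have cvz := svz.continuous
  have cvxx := svxx.continuous
  have cvzz := svzz.continuous
  have cTx := sTx.continuous
  have cTz := sTz.continuous
  have cTxx := sTxx.continuous
  have cTzz := sTzz.continuous
  have cW : Continuous fun p : ℝ × ℝ => ∫ ξ in (0:ℝ)..p.2, px2 v p.1 ξ := prim_cont cvx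
  have cΦ : Continuous fun p : ℝ × ℝ => ∫ ξ in (0:ℝ)..p.2, T p.1 ξ := prim_cont cT
  have cΦx : Continuous fun p : ℝ × ℝ => ∫ ξ in (0:ℝ)..p.2, px2 T p.1 ξ := prim_cont cTx
  -- the vertical integral of ∂ₓv over the full height vanishes
  have hWH : ∀ x : ℝ, (∫ ξ in (0:ℝ)..H, px2 v x ξ) = 0 := by
    intro x
    have hd : HasDerivAt (fun y => ∫ z in (0:ℝ)..H, v y z) (∫ ξ in (0:ℝ)..H, px2 v x ξ) x :=
      param_hasDerivAt cv cvx (fun y t => hasDerivAt_px2_s1 sv y t) 0 H x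
    have h0 : (fun y => ∫ z in (0:ℝ)..H, v y z) = fun _ => (0:ℝ) := funext fun y => mv y
    rw [h0] at hd
    exact hd.unique (hasDerivAt_const x 0)
  -- ∂ₓ of the primitive of T
  have hPx : ∀ (y z : ℝ), px2 (fun x z => ∫ ξ in (0:ℝ)..z, T x ξ) y z
      = ∫ ξ in (0:ℝ)..z, px2 T y ξ := fun y z =>
    (param_hasDerivAt cT cTx (fun a t => hasDerivAt_px2_s1 sT a t) 0 z y).deriv
  -- periodicity of derivatives
  have pvx : ∀ x z, px2 v (x + L) z = px2 v x z := px2_periodic pv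
  have pTx : ∀ x z, px2 T (x + L) z = px2 T x z := px2_periodic pT
  ------------------------------------------------------------------
  -- Momentum equation tested against v : the per-x identity
  ------------------------------------------------------------------
  have keyM : ∀ x : ℝ,
      (3/2 : ℝ) * (∫ z in (0:ℝ)..H, (v x z)^2 * px2 v x z)
        = νx * (∫ z in (0:ℝ)..H, ((px2 v x z)^2 + v x z * px2 (px2 v) x z))
          - νx * (∫ z in (0:ℝ)..H, (px2 v x z)^2)
          - νz * (∫ z in (0:ℝ)..H, (pz2 v x z)^2)
          - g * ρ₀ * β * (∫ z in (0:ℝ)..H, (px2 v x z * (∫ ξ in (0:ℝ)..z, T x ξ)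
              + v x z * (∫ ξ in (0:ℝ)..z, px2 T x ξ)))
          - g * ρ₀ * β * (∫ z in (0:ℝ)..H, T x z * (∫ ξ in (0:ℝ)..z, px2 v x ξ)) := by
    intro x
    have Cv := contRight cv x
    have Cvx := contRight cvx x
    have Cvz := contRight cvz x
    have Cvxx := contRight cvxx x
    have Cvzz := contRight cvzz x
    have CT := contRight cT x
    have CW : Continuous fun z => ∫ ξ in (0:ℝ)..z, px2 v x ξ :=
      by simpa [Function.comp_def] using cW.comp (Continuous.prodMk_right x)
    have CΦ : Continuous fun z => ∫ ξ in (0:ℝ)..z, T x ξ :=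
      by simpa [Function.comp_def] using cΦ.comp (Continuous.prodMk_right x)
    have CΦx : Continuous fun z => ∫ ξ in (0:ℝ)..z, px2 T x ξ :=
      by simpa [Function.comp_def] using cΦx.comp (Continuous.prodMk_right x)
    -- test the equation with v and integrate in z
    have e0 : (∫ z in (0:ℝ)..H, v x z * (v x z * px2 v x z
          - (∫ ξ in (0:ℝ)..z, px2 v x ξ) * pz2 v x z))
        = ∫ z in (0:ℝ)..H, v x z * (νx * px2 (px2 v) x z + νz * pz2 (pz2 v) x z
            - g * ρ₀ * β * (∫ ξ in (0:ℝ)..z, px2 T x ξ) - deriv q x) := by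
      refine intervalIntegral.integral_congr fun z hz => ?_
      have hz' : z ∈ Set.Icc (0:ℝ) H := by rwa [Set.uIcc_of_le hH.le] at hz
      have h := mom x z hz'
      rw [hPx x z] at h
      rw [h]
    -- split the left-hand side
    have lsplit : (∫ z in (0:ℝ)..H, v x z * (v x z * px2 v x z
          - (∫ ξ in (0:ℝ)..z, px2 v x ξ) * pz2 v x z))
        = (∫ z in (0:ℝ)..H, (v x z)^2 * px2 v x z)
          - (∫ z in (0:ℝ)..H, (∫ ξ in (0:ℝ)..z, px2 v x ξ) * (v x z * pz2 v x z)) := by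
      have h1 : (∫ z in (0:ℝ)..H, v x z * (v x z * px2 v x z
            - (∫ ξ in (0:ℝ)..z, px2 v x ξ) * pz2 v x z))
          = ∫ z in (0:ℝ)..H, ((v x z)^2 * px2 v x z
            - (∫ ξ in (0:ℝ)..z, px2 v x ξ) * (v x z * pz2 v x z)) :=
        int_congr fun z => by ring
      rw [h1, intervalIntegral.integral_sub (((Cv.fun_pow 2).fun_mul Cvx).intervalIntegrable 0 H)
        ((CW.fun_mul (Cv.fun_mul Cvz)).intervalIntegrable 0 H)]
    -- integration by parts in z for the nonlinear transport term
    have hu : ∀ z ∈ Set.uIcc (0:ℝ) H,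
        HasDerivAt (fun w => ∫ ξ in (0:ℝ)..w, px2 v x ξ) (px2 v x z) z :=
      fun z _ => prim_hasDerivAt Cvx z
    have hw : ∀ z ∈ Set.uIcc (0:ℝ) H,
        HasDerivAt (fun w => v x w * v x w / 2) (v x z * pz2 v x z) z := by
      intro z _
      have h := hasDerivAt_pz2_s1 sv x z
      have h2 := (h.fun_mul h).div_const 2
      refine h2.congr_deriv ?_
      ring
    have hibp := intervalIntegral.integral_mul_deriv_eq_deriv_mul hu hw
      (Cvx.intervalIntegrable 0 H) ((Cv.mul Cvz).intervalIntegrable 0 H)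
    rw [hWH x, intervalIntegral.integral_same] at hibp
    simp only [zero_mul, sub_zero, zero_sub] at hibp
    -- hibp : ∫ W * (v vz) = -∫ px2 v * (v*v/2)
    have hrel : (∫ z in (0:ℝ)..H, px2 v x z * (v x z * v x z / 2))
        = (1/2 : ℝ) * ∫ z in (0:ℝ)..H, (v x z)^2 * px2 v x z :=
      int_factor (1/2) fun z => by ring
    -- viscous z-term
    have hu2 : ∀ z ∈ Set.uIcc (0:ℝ) H, HasDerivAt (fun w => v x w) (pz2 v x z) z :=
      fun z _ => hasDerivAt_pz2_s1 sv x z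
    have hw2 : ∀ z ∈ Set.uIcc (0:ℝ) H, HasDerivAt (fun w => pz2 v x w) (pz2 (pz2 v) x z) z :=
      fun z _ => hasDerivAt_pz2_s1 svz x z
    have hibp2 := intervalIntegral.integral_mul_deriv_eq_deriv_mul hu2 hw2
      (Cvz.intervalIntegrable 0 H) (Cvzz.intervalIntegrable 0 H)
    rw [bv0 x, bvH x] at hibp2
    simp only [mul_zero, sub_zero, zero_sub] at hibp2
    have hsq : (∫ z in (0:ℝ)..H, pz2 v x z * pz2 v x z)
        = ∫ z in (0:ℝ)..H, (pz2 v x z)^2 := int_congr fun z => by ring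
    -- pressure term
    have hq0 : (∫ z in (0:ℝ)..H, v x z * deriv q x) = 0 := by
      rw [intervalIntegral.integral_mul_const, mv x, zero_mul]
    -- buoyancy term : integration by parts in z
    have hu3 : ∀ z ∈ Set.uIcc (0:ℝ) H,
        HasDerivAt (fun w => ∫ ξ in (0:ℝ)..w, T x ξ) (T x z) z :=
      fun z _ => prim_hasDerivAt CT z
    have hw3 : ∀ z ∈ Set.uIcc (0:ℝ) H,
        HasDerivAt (fun w => ∫ ξ in (0:ℝ)..w, px2 v x ξ) (px2 v x z) z :=
      fun z _ => prim_hasDerivAt Cvx z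
    have hibp3 := intervalIntegral.integral_mul_deriv_eq_deriv_mul hu3 hw3
      (CT.intervalIntegrable 0 H) (Cvx.intervalIntegrable 0 H)
    rw [hWH x, intervalIntegral.integral_same] at hibp3
    simp only [mul_zero, zero_mul, sub_zero, zero_sub] at hibp3
    -- hibp3 : ∫ (∫T) * px2 v = -∫ T * (∫ px2 v)
    have hcomm : (∫ z in (0:ℝ)..H, px2 v x z * (∫ ξ in (0:ℝ)..z, T x ξ))
        = ∫ z in (0:ℝ)..H, (∫ ξ in (0:ℝ)..z, T x ξ) * px2 v x z :=
      int_congr fun z => by ring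
    -- split the right-hand side
    have rsplit : (∫ z in (0:ℝ)..H, v x z * (νx * px2 (px2 v) x z + νz * pz2 (pz2 v) x z
          - g * ρ₀ * β * (∫ ξ in (0:ℝ)..z, px2 T x ξ) - deriv q x))
        = νx * (∫ z in (0:ℝ)..H, v x z * px2 (px2 v) x z)
          + νz * (∫ z in (0:ℝ)..H, v x z * pz2 (pz2 v) x z)
          + (-(g * ρ₀ * β)) * (∫ z in (0:ℝ)..H, v x z * (∫ ξ in (0:ℝ)..z, px2 T x ξ))
          + (-1 : ℝ) * (∫ z in (0:ℝ)..H, v x z * deriv q x) :=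
      int_split4 νx νz (-(g * ρ₀ * β)) (-1) (fun z => by ring)
        (Cv.mul Cvxx) (Cv.mul Cvzz) (Cv.mul CΦx) (Cv.mul (continuous_const))
    -- split the second-derivative x-term
    have hQ2 : (∫ z in (0:ℝ)..H, ((px2 v x z)^2 + v x z * px2 (px2 v) x z))
        = (∫ z in (0:ℝ)..H, (px2 v x z)^2) + ∫ z in (0:ℝ)..H, v x z * px2 (px2 v) x z :=
      intervalIntegral.integral_add ((Cvx.pow 2).intervalIntegrable 0 H)
        ((Cv.mul Cvxx).intervalIntegrable 0 H)
    -- split the buoyancy combination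
    have hQ3 : (∫ z in (0:ℝ)..H, (px2 v x z * (∫ ξ in (0:ℝ)..z, T x ξ)
          + v x z * (∫ ξ in (0:ℝ)..z, px2 T x ξ)))
        = (∫ z in (0:ℝ)..H, px2 v x z * (∫ ξ in (0:ℝ)..z, T x ξ))
          + ∫ z in (0:ℝ)..H, v x z * (∫ ξ in (0:ℝ)..z, px2 T x ξ) :=
      intervalIntegral.integral_add ((Cvx.mul CΦ).intervalIntegrable 0 H)
        ((Cv.mul CΦx).intervalIntegrable 0 H)
    linear_combination (-1 : ℝ) * lsplit + e0 + hibp - hrel + rsplit - νx * hQ2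
      + νz * hibp2 - νz * hsq - hq0 + (g * ρ₀ * β) * hQ3 + (g * ρ₀ * β) * hcomm
      + (g * ρ₀ * β) * hibp3
  ------------------------------------------------------------------
  -- x-integrals of exact derivatives vanish by periodicity (momentum)
  ------------------------------------------------------------------
  have hP1L : (∫ x in (0:ℝ)..L, ∫ z in (0:ℝ)..H, (v x z)^2 * px2 v x z) = 0 := by
    have hder : ∀ x : ℝ, HasDerivAt (fun y => ∫ z in (0:ℝ)..H, (v y z)^3 / 3)
        (∫ z in (0:ℝ)..H, (v x z)^2 * px2 v x z) x := by
      intro x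
      exact param_hasDerivAt (G := fun y z => (v y z)^3 / 3)
        (G' := fun x z => (v x z)^2 * px2 v x z)
        ((cv.pow 3).div_const 3) ((cv.pow 2).mul cvx)
        (fun y t => by
          have h2 := ((hasDerivAt_px2_s1 sv y t).fun_pow 3).div_const 3
          refine h2.congr_deriv ?_
          push_cast
          ring) 0 H x
    refine integral_deriv_periodic hder (param_cont ((cv.pow 2).mul cvx) 0 H) ?_
    exact int_congr fun z => by rw [show v L z = v 0 z from by simpa using pv 0 z]
  have hQ2L : (∫ x in (0:ℝ)..L, ∫ z in (0:ℝ)..H, ((px2 v x z)^2 + v x z * px2 (px2 v) x z)) = 0 := by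
    have hder : ∀ x : ℝ, HasDerivAt (fun y => ∫ z in (0:ℝ)..H, v y z * px2 v y z)
        (∫ z in (0:ℝ)..H, ((px2 v x z)^2 + v x z * px2 (px2 v) x z)) x := by
      intro x
      exact param_hasDerivAt (G := fun y z => v y z * px2 v y z)
        (G' := fun x z => (px2 v x z)^2 + v x z * px2 (px2 v) x z)
        (cv.mul cvx) ((cvx.pow 2).add (cv.mul cvxx))
        (fun y t => by
          have h2 := (hasDerivAt_px2_s1 sv y t).fun_mul (hasDerivAt_px2_s1 svx y t)
          refine h2.congr_deriv ?_
          ring) 0 H x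
    refine integral_deriv_periodic hder (param_cont ((cvx.pow 2).add (cv.mul cvxx)) 0 H) ?_
    exact int_congr fun z => by
      rw [show v L z = v 0 z from by simpa using pv 0 z,
        show px2 v L z = px2 v 0 z from by simpa using pvx 0 z]
  have hQ3L : (∫ x in (0:ℝ)..L, ∫ z in (0:ℝ)..H, (px2 v x z * (∫ ξ in (0:ℝ)..z, T x ξ)
      + v x z * (∫ ξ in (0:ℝ)..z, px2 T x ξ))) = 0 := by
    have hder : ∀ x : ℝ, HasDerivAt (fun y => ∫ z in (0:ℝ)..H, v y z * (∫ ξ in (0:ℝ)..z, T y ξ))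
        (∫ z in (0:ℝ)..H, (px2 v x z * (∫ ξ in (0:ℝ)..z, T x ξ)
          + v x z * (∫ ξ in (0:ℝ)..z, px2 T x ξ))) x := by
      intro x
      exact param_hasDerivAt (G := fun y z => v y z * (∫ ξ in (0:ℝ)..z, T y ξ))
        (G' := fun x z => px2 v x z * (∫ ξ in (0:ℝ)..z, T x ξ)
          + v x z * (∫ ξ in (0:ℝ)..z, px2 T x ξ))
        (cv.mul cΦ) ((cvx.mul cΦ).add (cv.mul cΦx))
        (fun y t =>
          (hasDerivAt_px2_s1 sv y t).mul
            (param_hasDerivAt cT cTx (fun a r => hasDerivAt_px2_s1 sT a r) 0 t y)) 0 H x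
    refine integral_deriv_periodic hder
      (param_cont ((cvx.mul cΦ).add (cv.mul cΦx)) 0 H) ?_
    refine int_congr fun z => ?_
    rw [show v L z = v 0 z from by simpa using pv 0 z,
      show (∫ ξ in (0:ℝ)..z, T L ξ) = ∫ ξ in (0:ℝ)..z, T 0 ξ from
        int_congr fun ξ => by simpa using pT 0 ξ]
  ------------------------------------------------------------------
  -- integrate the momentum identity in x
  ------------------------------------------------------------------
  have hM : νx * (∫ x in (0:ℝ)..L, ∫ z in (0:ℝ)..H, (px2 v x z)^2)
      + νz * (∫ x in (0:ℝ)..L, ∫ z in (0:ℝ)..H, (pz2 v x z)^2)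
      = -(g * ρ₀ * β) * (∫ x in (0:ℝ)..L, ∫ z in (0:ℝ)..H,
          T x z * (∫ ξ in (0:ℝ)..z, px2 v x ξ)) := by
    have hMint := int_congr (a := 0) (b := L) keyM
    have hlhs : (∫ x in (0:ℝ)..L, (3/2 : ℝ) * (∫ z in (0:ℝ)..H, (v x z)^2 * px2 v x z))
        = (3/2 : ℝ) * ∫ x in (0:ℝ)..L, ∫ z in (0:ℝ)..H, (v x z)^2 * px2 v x z :=
      int_factor (3/2) fun x => rfl
    have hrhs : (∫ x in (0:ℝ)..L,
          (νx * (∫ z in (0:ℝ)..H, ((px2 v x z)^2 + v x z * px2 (px2 v) x z))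
          - νx * (∫ z in (0:ℝ)..H, (px2 v x z)^2)
          - νz * (∫ z in (0:ℝ)..H, (pz2 v x z)^2)
          - g * ρ₀ * β * (∫ z in (0:ℝ)..H, (px2 v x z * (∫ ξ in (0:ℝ)..z, T x ξ)
              + v x z * (∫ ξ in (0:ℝ)..z, px2 T x ξ)))
          - g * ρ₀ * β * (∫ z in (0:ℝ)..H, T x z * (∫ ξ in (0:ℝ)..z, px2 v x ξ))))
        = νx * (∫ x in (0:ℝ)..L, ∫ z in (0:ℝ)..H, ((px2 v x z)^2 + v x z * px2 (px2 v) x z))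
          + (-νx) * (∫ x in (0:ℝ)..L, ∫ z in (0:ℝ)..H, (px2 v x z)^2)
          + (-νz) * (∫ x in (0:ℝ)..L, ∫ z in (0:ℝ)..H, (pz2 v x z)^2)
          + (-(g * ρ₀ * β)) * (∫ x in (0:ℝ)..L, ∫ z in (0:ℝ)..H,
              (px2 v x z * (∫ ξ in (0:ℝ)..z, T x ξ) + v x z * (∫ ξ in (0:ℝ)..z, px2 T x ξ)))
          + (-(g * ρ₀ * β)) * (∫ x in (0:ℝ)..L, ∫ z in (0:ℝ)..H,
              T x z * (∫ ξ in (0:ℝ)..z, px2 v x ξ)) :=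
      int_split5 νx (-νx) (-νz) (-(g * ρ₀ * β)) (-(g * ρ₀ * β)) (fun x => by ring)
        (param_cont ((cvx.pow 2).add (cv.mul cvxx)) 0 H)
        (param_cont (cvx.pow 2) 0 H)
        (param_cont (cvz.pow 2) 0 H)
        (param_cont ((cvx.mul cΦ).add (cv.mul cΦx)) 0 H)
        (param_cont (cT.mul cW) 0 H)
    rw [hlhs, hrhs, hP1L, hQ2L, hQ3L] at hMint
    linear_combination hMint
  ------------------------------------------------------------------
  -- Heat equation tested against T : the per-x identity
  ------------------------------------------------------------------
  have keyH : ∀ x : ℝ,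
      (1/2 : ℝ) * (∫ z in (0:ℝ)..H, (px2 v x z * (T x z * T x z)
          + v x z * (px2 T x z * T x z + T x z * px2 T x z)))
        = κx * (∫ z in (0:ℝ)..H, ((px2 T x z)^2 + T x z * px2 (px2 T) x z))
          - κx * (∫ z in (0:ℝ)..H, (px2 T x z)^2)
          - κz * (∫ z in (0:ℝ)..H, (pz2 T x z)^2)
          + ((T₁ - T₀) / H) * (∫ z in (0:ℝ)..H, T x z * (∫ ξ in (0:ℝ)..z, px2 v x ξ)) := by
    intro x
    have Cv := contRight cv x
    have Cvx := contRight cvx x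
    have CT := contRight cT x
    have CTx := contRight cTx x
    have CTz := contRight cTz x
    have CTxx := contRight cTxx x
    have CTzz := contRight cTzz x
    have CW : Continuous fun z => ∫ ξ in (0:ℝ)..z, px2 v x ξ :=
      by simpa [Function.comp_def] using cW.comp (Continuous.prodMk_right x)
    -- test the equation with T and integrate in z
    have e1 : (∫ z in (0:ℝ)..H, T x z * (v x z * px2 T x z
          - (∫ ξ in (0:ℝ)..z, px2 v x ξ) * pz2 T x z))
        = ∫ z in (0:ℝ)..H, T x z * (κx * px2 (px2 T) x z + κz * pz2 (pz2 T) x z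
            + ((T₁ - T₀) / H) * (∫ ξ in (0:ℝ)..z, px2 v x ξ)) := by
      refine intervalIntegral.integral_congr fun z hz => ?_
      have hz' : z ∈ Set.Icc (0:ℝ) H := by rwa [Set.uIcc_of_le hH.le] at hz
      rw [heatx x z hz']
    -- split the left-hand side
    have lsplit : (∫ z in (0:ℝ)..H, T x z * (v x z * px2 T x z
          - (∫ ξ in (0:ℝ)..z, px2 v x ξ) * pz2 T x z))
        = (∫ z in (0:ℝ)..H, v x z * (T x z * px2 T x z))
          - (∫ z in (0:ℝ)..H, (∫ ξ in (0:ℝ)..z, px2 v x ξ) * (T x z * pz2 T x z)) := by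
      have h1 : (∫ z in (0:ℝ)..H, T x z * (v x z * px2 T x z
            - (∫ ξ in (0:ℝ)..z, px2 v x ξ) * pz2 T x z))
          = ∫ z in (0:ℝ)..H, (v x z * (T x z * px2 T x z)
            - (∫ ξ in (0:ℝ)..z, px2 v x ξ) * (T x z * pz2 T x z)) :=
        int_congr fun z => by ring
      rw [h1, intervalIntegral.integral_sub ((Cv.fun_mul (CT.fun_mul CTx)).intervalIntegrable 0 H)
        ((CW.fun_mul (CT.fun_mul CTz)).intervalIntegrable 0 H)]
    -- relate ∫ v T Tx to the exact x-derivative term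
    have hsplit2 : (∫ z in (0:ℝ)..H, v x z * (T x z * px2 T x z))
        = (1/2 : ℝ) * (∫ z in (0:ℝ)..H, (px2 v x z * (T x z * T x z)
            + v x z * (px2 T x z * T x z + T x z * px2 T x z)))
          + (-(1/2) : ℝ) * (∫ z in (0:ℝ)..H, px2 v x z * (T x z * T x z)) :=
      int_split2 (1/2) (-(1/2)) (fun z => by ring)
        ((Cvx.mul (CT.mul CT)).add (Cv.mul ((CTx.mul CT).add (CT.mul CTx))))
        (Cvx.mul (CT.mul CT))
    -- integration by parts in z for the nonlinear transport term
    have hu : ∀ z ∈ Set.uIcc (0:ℝ) H,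
        HasDerivAt (fun w => ∫ ξ in (0:ℝ)..w, px2 v x ξ) (px2 v x z) z :=
      fun z _ => prim_hasDerivAt Cvx z
    have hw : ∀ z ∈ Set.uIcc (0:ℝ) H,
        HasDerivAt (fun w => T x w * T x w / 2) (T x z * pz2 T x z) z := by
      intro z _
      have h := hasDerivAt_pz2_s1 sT x z
      have h2 := (h.fun_mul h).div_const 2
      refine h2.congr_deriv ?_
      ring
    have hibp := intervalIntegral.integral_mul_deriv_eq_deriv_mul hu hw
      (Cvx.intervalIntegrable 0 H) ((CT.mul CTz).intervalIntegrable 0 H)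
    rw [hWH x, intervalIntegral.integral_same] at hibp
    simp only [zero_mul, sub_zero, zero_sub] at hibp
    have hrel : (∫ z in (0:ℝ)..H, px2 v x z * (T x z * T x z / 2))
        = (1/2 : ℝ) * ∫ z in (0:ℝ)..H, px2 v x z * (T x z * T x z) :=
      int_factor (1/2) fun z => by ring
    -- diffusion z-term
    have hu2 : ∀ z ∈ Set.uIcc (0:ℝ) H, HasDerivAt (fun w => T x w) (pz2 T x z) z :=
      fun z _ => hasDerivAt_pz2_s1 sT x z
    have hw2 : ∀ z ∈ Set.uIcc (0:ℝ) H, HasDerivAt (fun w => pz2 T x w) (pz2 (pz2 T) x z) z :=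
      fun z _ => hasDerivAt_pz2_s1 sTz x z
    have hibp2 := intervalIntegral.integral_mul_deriv_eq_deriv_mul hu2 hw2
      (CTz.intervalIntegrable 0 H) (CTzz.intervalIntegrable 0 H)
    rw [bT0 x, bTH x] at hibp2
    simp only [zero_mul, sub_zero, zero_sub] at hibp2
    have hsq : (∫ z in (0:ℝ)..H, pz2 T x z * pz2 T x z)
        = ∫ z in (0:ℝ)..H, (pz2 T x z)^2 := int_congr fun z => by ring
    -- split the right-hand side
    have rsplit : (∫ z in (0:ℝ)..H, T x z * (κx * px2 (px2 T) x z + κz * pz2 (pz2 T) x z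
          + ((T₁ - T₀) / H) * (∫ ξ in (0:ℝ)..z, px2 v x ξ)))
        = κx * (∫ z in (0:ℝ)..H, T x z * px2 (px2 T) x z)
          + κz * (∫ z in (0:ℝ)..H, T x z * pz2 (pz2 T) x z)
          + ((T₁ - T₀) / H) * (∫ z in (0:ℝ)..H, T x z * (∫ ξ in (0:ℝ)..z, px2 v x ξ)) :=
      int_split3 κx κz ((T₁ - T₀) / H) (fun z => by ring)
        (CT.mul CTxx) (CT.mul CTzz) (CT.mul CW)
    -- split the second-derivative x-term
    have hQ5 : (∫ z in (0:ℝ)..H, ((px2 T x z)^2 + T x z * px2 (px2 T) x z))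
        = (∫ z in (0:ℝ)..H, (px2 T x z)^2) + ∫ z in (0:ℝ)..H, T x z * px2 (px2 T) x z :=
      intervalIntegral.integral_add ((CTx.pow 2).intervalIntegrable 0 H)
        ((CT.mul CTxx).intervalIntegrable 0 H)
    linear_combination (-1 : ℝ) * lsplit + e1 - hsplit2 + hibp - hrel
      - κx * hQ5 + κz * hibp2 - κz * hsq + rsplit
  ------------------------------------------------------------------
  -- x-integrals of exact derivatives vanish by periodicity (heat)
  ------------------------------------------------------------------
  have hQ4L : (∫ x in (0:ℝ)..L, ∫ z in (0:ℝ)..H, (px2 v x z * (T x z * T x z)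
      + v x z * (px2 T x z * T x z + T x z * px2 T x z))) = 0 := by
    have hder : ∀ x : ℝ, HasDerivAt (fun y => ∫ z in (0:ℝ)..H, v y z * (T y z * T y z))
        (∫ z in (0:ℝ)..H, (px2 v x z * (T x z * T x z)
          + v x z * (px2 T x z * T x z + T x z * px2 T x z))) x := by
      intro x
      exact param_hasDerivAt (G := fun y z => v y z * (T y z * T y z))
        (G' := fun x z => px2 v x z * (T x z * T x z)
          + v x z * (px2 T x z * T x z + T x z * px2 T x z))
        (cv.mul (cT.mul cT)) ((cvx.mul (cT.mul cT)).add (cv.mul ((cTx.mul cT).add (cT.mul cTx))))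
        (fun y t =>
          (hasDerivAt_px2_s1 sv y t).mul
            ((hasDerivAt_px2_s1 sT y t).mul (hasDerivAt_px2_s1 sT y t))) 0 H x
    refine integral_deriv_periodic hder
      (param_cont ((cvx.mul (cT.mul cT)).add (cv.mul ((cTx.mul cT).add (cT.mul cTx)))) 0 H) ?_
    exact int_congr fun z => by
      rw [show v L z = v 0 z from by simpa using pv 0 z,
        show T L z = T 0 z from by simpa using pT 0 z]
  have hQ5L : (∫ x in (0:ℝ)..L, ∫ z in (0:ℝ)..H, ((px2 T x z)^2 + T x z * px2 (px2 T) x z)) = 0 := by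
    have hder : ∀ x : ℝ, HasDerivAt (fun y => ∫ z in (0:ℝ)..H, T y z * px2 T y z)
        (∫ z in (0:ℝ)..H, ((px2 T x z)^2 + T x z * px2 (px2 T) x z)) x := by
      intro x
      exact param_hasDerivAt (G := fun y z => T y z * px2 T y z)
        (G' := fun x z => (px2 T x z)^2 + T x z * px2 (px2 T) x z)
        (cT.mul cTx) ((cTx.pow 2).add (cT.mul cTxx))
        (fun y t => by
          have h2 := (hasDerivAt_px2_s1 sT y t).fun_mul (hasDerivAt_px2_s1 sTx y t)
          refine h2.congr_deriv ?_
          ring) 0 H x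
    refine integral_deriv_periodic hder (param_cont ((cTx.pow 2).add (cT.mul cTxx)) 0 H) ?_
    exact int_congr fun z => by
      rw [show T L z = T 0 z from by simpa using pT 0 z,
        show px2 T L z = px2 T 0 z from by simpa using pTx 0 z]
  ------------------------------------------------------------------
  -- integrate the heat identity in x
  ------------------------------------------------------------------
  have hHeat : κx * (∫ x in (0:ℝ)..L, ∫ z in (0:ℝ)..H, (px2 T x z)^2)
      + κz * (∫ x in (0:ℝ)..L, ∫ z in (0:ℝ)..H, (pz2 T x z)^2)
      = ((T₁ - T₀) / H) * (∫ x in (0:ℝ)..L, ∫ z in (0:ℝ)..H,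
          T x z * (∫ ξ in (0:ℝ)..z, px2 v x ξ)) := by
    have hHint := int_congr (a := 0) (b := L) keyH
    have hlhs : (∫ x in (0:ℝ)..L, (1/2 : ℝ) * (∫ z in (0:ℝ)..H, (px2 v x z * (T x z * T x z)
          + v x z * (px2 T x z * T x z + T x z * px2 T x z))))
        = (1/2 : ℝ) * ∫ x in (0:ℝ)..L, ∫ z in (0:ℝ)..H, (px2 v x z * (T x z * T x z)
          + v x z * (px2 T x z * T x z + T x z * px2 T x z)) :=
      int_factor (1/2) fun x => rfl
    have hrhs : (∫ x in (0:ℝ)..L,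
          (κx * (∫ z in (0:ℝ)..H, ((px2 T x z)^2 + T x z * px2 (px2 T) x z))
          - κx * (∫ z in (0:ℝ)..H, (px2 T x z)^2)
          - κz * (∫ z in (0:ℝ)..H, (pz2 T x z)^2)
          + ((T₁ - T₀) / H) * (∫ z in (0:ℝ)..H, T x z * (∫ ξ in (0:ℝ)..z, px2 v x ξ))))
        = κx * (∫ x in (0:ℝ)..L, ∫ z in (0:ℝ)..H, ((px2 T x z)^2 + T x z * px2 (px2 T) x z))
          + (-κx) * (∫ x in (0:ℝ)..L, ∫ z in (0:ℝ)..H, (px2 T x z)^2)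
          + (-κz) * (∫ x in (0:ℝ)..L, ∫ z in (0:ℝ)..H, (pz2 T x z)^2)
          + ((T₁ - T₀) / H) * (∫ x in (0:ℝ)..L, ∫ z in (0:ℝ)..H,
              T x z * (∫ ξ in (0:ℝ)..z, px2 v x ξ)) :=
      int_split4 κx (-κx) (-κz) ((T₁ - T₀) / H) (fun x => by ring)
        (param_cont ((cTx.pow 2).add (cT.mul cTxx)) 0 H)
        (param_cont (cTx.pow 2) 0 H)
        (param_cont (cTz.pow 2) 0 H)
        (param_cont (cT.mul cW) 0 H)
    rw [hlhs, hrhs, hQ4L, hQ5L] at hHint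
    linear_combination hHint
  ------------------------------------------------------------------
  -- conclusion
  ------------------------------------------------------------------
  rw [hHeat, hM]
  field_simp
  ring
end
end

section
/- L² exponential decay with equal boundary temperatures: Assume s = 0 (so the terms involving R are absent from both equations). There exist constants λ > 0 and C ≥ 1, depending only on α, Pr_x, Pr_z, κ_a, such that every smooth solution (v, Θ, q) of the nondimensional primitive perturbation system on [0, ∞) satisfies, for all t ≥ 0, ‖v(t)‖_{L²}² + ‖Θ(t)‖_{L²}² ≤ C e^{−2λt} (‖v₀‖_{L²}² + ‖Θ₀‖_{L²}²). In fact ‖Θ(t)‖_{L²}² ≤ e^{−λt} ‖Θ₀‖_{L²}² decays with a rate depending only on the Poincaré constant of D and κ_a. -/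
noncomputable section

open Real MeasureTheory Filter
open scoped ENNReal

/-- Partial derivative in the time variable of a function of (t, x, z). -/
def pT (f : ℝ → ℝ → ℝ → ℝ) : ℝ → ℝ → ℝ → ℝ := fun t x z => deriv (fun s => f s x z) t

/-- Partial derivative in the horizontal variable x of a function of (t, x, z). -/
def pX (f : ℝ → ℝ → ℝ → ℝ) : ℝ → ℝ → ℝ → ℝ := fun t x z => deriv (fun y => f t y z) x

/-- Partial derivative in the vertical variable z of a function of (t, x, z). -/
def pZ (f : ℝ → ℝ → ℝ → ℝ) : ℝ → ℝ → ℝ → ℝ := fun t x z => deriv (fun w => f t x w) z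

/-- Squared L² norm over D = (0, α) × (0, 1) of the time-t slice of f. -/
def L2sqT (α : ℝ) (f : ℝ → ℝ → ℝ → ℝ) (t : ℝ) : ℝ :=
  ∫ x in (0:ℝ)..α, ∫ z in (0:ℝ)..1, (f t x z) ^ 2

/-- Squared H¹ norm over D = (0, α) × (0, 1) of the time-t slice of f. -/
def H1sqT (α : ℝ) (f : ℝ → ℝ → ℝ → ℝ) (t : ℝ) : ℝ :=
  L2sqT α f t + L2sqT α (pX f) t + L2sqT α (pZ f) t

/-- Squared H² norm over D = (0, α) × (0, 1) of the time-t slice of f. -/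
def H2sqT (α : ℝ) (f : ℝ → ℝ → ℝ → ℝ) (t : ℝ) : ℝ :=
  H1sqT α f t + L2sqT α (pX (pX f)) t + L2sqT α (pX (pZ f)) t + L2sqT α (pZ (pZ f)) t

/-- A smooth solution of the nondimensional primitive perturbation system on the time
interval `I`, with buoyancy coefficient `c₁` (= R^|s|) and thermal forcing coefficient
`c₂` (= −sR):

∂ₜv + v ∂ₓv − (∫₀^z ∂ₓv dξ) ∂_z v = Pr_x ∂ₓ²v + Pr_z ∂_z²v − c₁ ∂ₓ(∫₀^z Θ dξ) − ∂ₓq,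
∂ₜΘ + v ∂ₓΘ − (∫₀^z ∂ₓv dξ) ∂_z Θ = ∂ₓ²Θ + κ_a ∂_z²Θ + c₂ ∫₀^z ∂ₓv dξ,

with periodicity in x of period α, boundary conditions ∂_z v = 0 and Θ = 0 at z = 0, 1,
and zero vertical mean of v. -/
structure NondimSolution (I : Set ℝ) (α Prx Prz κa c₁ c₂ : ℝ)
    (v Θ : ℝ → ℝ → ℝ → ℝ) (q : ℝ → ℝ → ℝ) : Prop where
  smooth_v : ContDiff ℝ (⊤ : ℕ∞) (fun p : ℝ × ℝ × ℝ => v p.1 p.2.1 p.2.2)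
  smooth_Θ : ContDiff ℝ (⊤ : ℕ∞) (fun p : ℝ × ℝ × ℝ => Θ p.1 p.2.1 p.2.2)
  smooth_q : ContDiff ℝ (⊤ : ℕ∞) (fun p : ℝ × ℝ => q p.1 p.2)
  periodic_v : ∀ t x z, v t (x + α) z = v t x z
  periodic_Θ : ∀ t x z, Θ t (x + α) z = Θ t x z
  periodic_q : ∀ t x, q t (x + α) = q t x
  momentum : ∀ t ∈ I, ∀ (x : ℝ), ∀ z ∈ Set.Icc (0:ℝ) 1,
    pT v t x z + v t x z * pX v t x z - (∫ ξ in (0:ℝ)..z, pX v t x ξ) * pZ v t x z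
      = Prx * pX (pX v) t x z + Prz * pZ (pZ v) t x z
        - c₁ * pX (fun t x z => ∫ ξ in (0:ℝ)..z, Θ t x ξ) t x z
        - deriv (fun y => q t y) x
  heat : ∀ t ∈ I, ∀ (x : ℝ), ∀ z ∈ Set.Icc (0:ℝ) 1,
    pT Θ t x z + v t x z * pX Θ t x z - (∫ ξ in (0:ℝ)..z, pX v t x ξ) * pZ Θ t x z
      = pX (pX Θ) t x z + κa * pZ (pZ Θ) t x z + c₂ * ∫ ξ in (0:ℝ)..z, pX v t x ξ
  bc_v0 : ∀ t ∈ I, ∀ x : ℝ, pZ v t x 0 = 0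
  bc_v1 : ∀ t ∈ I, ∀ x : ℝ, pZ v t x 1 = 0
  bc_Θ0 : ∀ t ∈ I, ∀ x : ℝ, Θ t x 0 = 0
  bc_Θ1 : ∀ t ∈ I, ∀ x : ℝ, Θ t x 1 = 0
  mean_v : ∀ t ∈ I, ∀ x : ℝ, (∫ z in (0:ℝ)..1, v t x z) = 0


/-! Energy method. Testing the heat equation with `Θ`, the transport terms are a divergence
(`∂_z` of `∫₀^z ∂ₓv` is `∂ₓv`, so the flow is incompressible), hence
`d/dt ‖Θ‖² = -2‖∂ₓΘ‖² - 2κa‖∂_zΘ‖² ≤ -2κa‖Θ‖²` by the Poincaré inequality in `z`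
(`Θ` vanishes at `z = 0`). Testing the momentum equation with `v`, transport and pressure again
integrate to zero (the pressure because `∫₀¹ v dz = 0`), the buoyancy term is absorbed by Young's
inequality and `‖∫₀^z Θ‖ ≤ ‖Θ‖`, and Poincaré for zero-mean functions gives
`d/dt ‖v‖² ≤ -2Prz‖v‖² + ‖Θ‖²/(2Prx)`. By Grönwall the weighted energy
`‖v‖² + ‖Θ‖²/(Prx κa)` decays at rate `2 min(Prz, 3κa/4)`. -/

open Set intervalIntegral

lemma integral_sub_const_sq {g : ℝ → ℝ} (hg : Continuous g) (c : ℝ) :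
    ∫ z in (0:ℝ)..1, (g z - c) ^ 2
      = (∫ z in (0:ℝ)..1, g z ^ 2) - 2 * c * (∫ z in (0:ℝ)..1, g z) + c ^ 2 := by
  have hexp : ∀ z, (g z - c) ^ 2 = g z ^ 2 - 2 * c * g z + c ^ 2 := fun z => by ring
  simp only [hexp]
  rw [intervalIntegral.integral_add, intervalIntegral.integral_sub,
    intervalIntegral.integral_const_mul]
  · simp
  all_goals first
    | exact intervalIntegrable_const
    | exact Continuous.intervalIntegrable (by fun_prop) _ _

lemma sq_integral_le_integral_sq {g : ℝ → ℝ} (hg : Continuous g) :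
    (∫ z in (0:ℝ)..1, g z) ^ 2 ≤ ∫ z in (0:ℝ)..1, g z ^ 2 := by
  have h := integral_sub_const_sq hg (∫ z in (0:ℝ)..1, g z)
  have : 0 ≤ ∫ z in (0:ℝ)..1, (g z - ∫ z in (0:ℝ)..1, g z) ^ 2 :=
    integral_nonneg zero_le_one fun _ _ => sq_nonneg _
  nlinarith

lemma sq_primitive_le_integral_sq {g : ℝ → ℝ} (hg : Continuous g) {z : ℝ}
    (hz : z ∈ Icc (0:ℝ) 1) :
    (∫ ξ in (0:ℝ)..z, g ξ) ^ 2 ≤ ∫ ξ in (0:ℝ)..1, g ξ ^ 2 := by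
  have habs : |∫ ξ in (0:ℝ)..z, g ξ| ≤ ∫ ξ in (0:ℝ)..1, |g ξ| :=
    (abs_integral_le_integral_abs hz.1).trans <|
      integral_mono_interval le_rfl hz.1 hz.2 (Eventually.of_forall fun _ => abs_nonneg _)
        (hg.abs.intervalIntegrable 0 1)
  calc (∫ ξ in (0:ℝ)..z, g ξ) ^ 2 = |∫ ξ in (0:ℝ)..z, g ξ| ^ 2 := (sq_abs _).symm
    _ ≤ (∫ ξ in (0:ℝ)..1, |g ξ|) ^ 2 := pow_le_pow_left₀ (abs_nonneg _) habs 2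
    _ ≤ ∫ ξ in (0:ℝ)..1, |g ξ| ^ 2 := sq_integral_le_integral_sq hg.abs
    _ = ∫ ξ in (0:ℝ)..1, g ξ ^ 2 := by simp_rw [sq_abs]

lemma integral_sq_primitive_le {g : ℝ → ℝ} (hg : Continuous g) :
    ∫ z in (0:ℝ)..1, (∫ ξ in (0:ℝ)..z, g ξ) ^ 2 ≤ ∫ z in (0:ℝ)..1, g z ^ 2 := by
  have hprim : Continuous fun z => ∫ ξ in (0:ℝ)..z, g ξ :=
    continuous_primitive (fun _ _ => hg.intervalIntegrable _ _) 0
  calc ∫ z in (0:ℝ)..1, (∫ ξ in (0:ℝ)..z, g ξ) ^ 2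
      ≤ ∫ _ in (0:ℝ)..1, ∫ ξ in (0:ℝ)..1, g ξ ^ 2 :=
        integral_mono_on zero_le_one ((hprim.pow 2).intervalIntegrable _ _)
          intervalIntegrable_const fun z hz => sq_primitive_le_integral_sq hg hz
    _ = ∫ z in (0:ℝ)..1, g z ^ 2 := by simp

lemma integral_sq_le_integral_deriv_sq_of_eq_zero {g g' : ℝ → ℝ}
    (hd : ∀ z, HasDerivAt g (g' z) z) (hg' : Continuous g') (h0 : g 0 = 0) :
    ∫ z in (0:ℝ)..1, g z ^ 2 ≤ ∫ z in (0:ℝ)..1, g' z ^ 2 := by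
  have hprim : g = fun z => ∫ ξ in (0:ℝ)..z, g' ξ := funext fun z => by
    rw [integral_eq_sub_of_hasDerivAt (fun ξ _ => hd ξ) (hg'.intervalIntegrable _ _), h0,
      sub_zero]
  rw [hprim]
  exact integral_sq_primitive_le hg'

lemma integral_sq_le_integral_deriv_sq_of_integral_eq_zero {g g' : ℝ → ℝ}
    (hd : ∀ z, HasDerivAt g (g' z) z) (hg' : Continuous g')
    (hmean : ∫ z in (0:ℝ)..1, g z = 0) :
    ∫ z in (0:ℝ)..1, g z ^ 2 ≤ ∫ z in (0:ℝ)..1, g' z ^ 2 := by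
  have hg : Continuous g := continuous_iff_continuousAt.2 fun z => (hd z).continuousAt
  have hshift := integral_sq_le_integral_deriv_sq_of_eq_zero (g := fun z => g z - g 0)
    (fun z => (hd z).sub_const _) hg' (sub_self _)
  rw [integral_sub_const_sq hg, hmean] at hshift
  nlinarith [sq_nonneg (g 0)]

lemma hasDerivAt_integral_of_continuous {F F' : ℝ → ℝ → ℝ}
    (hF : Continuous (Function.uncurry F)) (hF' : Continuous (Function.uncurry F'))
    (hd : ∀ y s, HasDerivAt (fun y => F y s) (F' y s) y) (a b x : ℝ) :
    HasDerivAt (fun y => ∫ s in a..b, F y s) (∫ s in a..b, F' x s) x := by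
  obtain ⟨C, hC⟩ := ((isCompact_closedBall x 1).prod (isCompact_uIcc (a := a) (b := b))
    ).exists_bound_of_continuousOn hF'.continuousOn
  refine (hasDerivAt_integral_of_dominated_loc_of_deriv_le (bound := fun _ => C)
    (Metric.ball_mem_nhds x one_pos)
    (Eventually.of_forall fun y => (hF.comp (Continuous.prodMk_right y)).aestronglyMeasurable)
    ((hF.comp (Continuous.prodMk_right x)).intervalIntegrable a b)
    (hF'.comp (Continuous.prodMk_right x)).aestronglyMeasurable
    (Eventually.of_forall fun s hs y hy => hC (y, s) ⟨Metric.ball_subset_closedBall hy,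
      uIoc_subset_uIcc hs⟩)
    intervalIntegrable_const (Eventually.of_forall fun s _ y _ => hd y s)).2

lemma le_exp_mul_of_hasDerivAt_le {F F' : ℝ → ℝ} {c : ℝ}
    (hd : ∀ t ≥ 0, HasDerivAt F (F' t) t) (hb : ∀ t ≥ 0, F' t ≤ -c * F t) {t : ℝ}
    (ht : 0 ≤ t) :
    F t ≤ exp (-c * t) * F 0 := by
  have h := le_gronwallBound_of_liminf_deriv_right_le (f := F) (f' := F') (δ := F 0) (K := -c)
    (ε := 0) (a := 0) (b := t)
    (fun s hs => (hd s hs.1).continuousAt.continuousWithinAt)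
    (fun s hs _ hr => (hd s hs.1).hasDerivWithinAt.liminf_right_slope_le hr) le_rfl
    (fun s hs => by simpa using hb s hs.1) t ⟨ht, le_rfl⟩
  rwa [gronwallBound_ε0, sub_zero, mul_comm] at h

def rectIntegral (α : ℝ) (F : ℝ → ℝ → ℝ) : ℝ := ∫ x in (0:ℝ)..α, ∫ z in (0:ℝ)..1, F x z

section RectIntegral

variable {α : ℝ} {F G : ℝ → ℝ → ℝ}

lemma continuous_integral_z (hF : Continuous (Function.uncurry F)) :
    Continuous fun x => ∫ z in (0:ℝ)..1, F x z :=
  continuous_parametric_intervalIntegral_of_continuous' hF 0 1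

lemma rectIntegral_add (hF : Continuous (Function.uncurry F))
    (hG : Continuous (Function.uncurry G)) :
    rectIntegral α (fun x z => F x z + G x z) = rectIntegral α F + rectIntegral α G := by
  have hslice (x : ℝ) : ∫ z in (0:ℝ)..1, F x z + G x z
      = (∫ z in (0:ℝ)..1, F x z) + ∫ z in (0:ℝ)..1, G x z :=
    intervalIntegral.integral_add ((by fun_prop : Continuous (F x)).intervalIntegrable _ _)
      ((by fun_prop : Continuous (G x)).intervalIntegrable _ _)
  simp only [rectIntegral, hslice]
  exact intervalIntegral.integral_add ((continuous_integral_z hF).intervalIntegrable _ _)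
    ((continuous_integral_z hG).intervalIntegrable _ _)

lemma rectIntegral_const_mul (c : ℝ) :
    rectIntegral α (fun x z => c * F x z) = c * rectIntegral α F := by
  simp only [rectIntegral, intervalIntegral.integral_const_mul]

lemma rectIntegral_congr (h : ∀ x, ∀ z ∈ Icc (0:ℝ) 1, F x z = G x z) :
    rectIntegral α F = rectIntegral α G :=
  integral_congr fun x _ => integral_congr fun z hz =>
    h x z (by rwa [uIcc_of_le zero_le_one] at hz)

lemma rectIntegral_mono_of_integral_le (hα : 0 ≤ α) (hF : Continuous (Function.uncurry F))
    (hG : Continuous (Function.uncurry G))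
    (h : ∀ x, ∫ z in (0:ℝ)..1, F x z ≤ ∫ z in (0:ℝ)..1, G x z) :
    rectIntegral α F ≤ rectIntegral α G :=
  integral_mono_on hα ((continuous_integral_z hF).intervalIntegrable _ _)
    ((continuous_integral_z hG).intervalIntegrable _ _) fun x _ => h x

lemma rectIntegral_mono (hα : 0 ≤ α) (hF : Continuous (Function.uncurry F))
    (hG : Continuous (Function.uncurry G)) (h : ∀ x, ∀ z ∈ Icc (0:ℝ) 1, F x z ≤ G x z) :
    rectIntegral α F ≤ rectIntegral α G :=
  rectIntegral_mono_of_integral_le hα hF hG fun x =>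
    integral_mono_on zero_le_one ((by fun_prop : Continuous (F x)).intervalIntegrable _ _)
      ((by fun_prop : Continuous (G x)).intervalIntegrable _ _) (h x)

lemma rectIntegral_eq_integral_integral_swap (hα : 0 ≤ α)
    (hF : Continuous (Function.uncurry F)) :
    rectIntegral α F = ∫ z in (0:ℝ)..1, ∫ x in (0:ℝ)..α, F x z := by
  have hint : Integrable (Function.uncurry F)
      ((volume.restrict (Ioc 0 α)).prod (volume.restrict (Ioc (0:ℝ) 1))) := by
    rw [Measure.prod_restrict]
    exact (hF.continuousOn.integrableOn_compact (isCompact_Icc.prod isCompact_Icc)).mono_set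
      (prod_mono Ioc_subset_Icc_self Ioc_subset_Icc_self)
  simpa only [rectIntegral, integral_of_le hα, integral_of_le zero_le_one]
    using integral_integral_swap hint

lemma rectIntegral_add_divergence (hα : 0 ≤ α) {A A' B B' : ℝ → ℝ → ℝ}
    (hG : Continuous (Function.uncurry G)) (hA' : Continuous (Function.uncurry A'))
    (hB' : Continuous (Function.uncurry B'))
    (hA : ∀ x z, HasDerivAt (fun y => A y z) (A' x z) x)
    (hB : ∀ x z, HasDerivAt (B x) (B' x z) z)
    (hAper : ∀ z, A α z = A 0 z) (hBbdry : ∀ x, B x 1 = B x 0) :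
    rectIntegral α (fun x z => G x z + A' x z + B' x z) = rectIntegral α G := by
  have hA'int : rectIntegral α A' = 0 := by
    have hslice (z : ℝ) : ∫ x in (0:ℝ)..α, A' x z = 0 := by
      rw [integral_eq_sub_of_hasDerivAt (fun x _ => hA x z)
        ((by fun_prop : Continuous fun x => A' x z).intervalIntegrable _ _), hAper, sub_self]
    simp [rectIntegral_eq_integral_integral_swap hα hA', hslice]
  have hB'int : rectIntegral α B' = 0 := by
    have hslice (x : ℝ) : ∫ z in (0:ℝ)..1, B' x z = 0 := by
      rw [integral_eq_sub_of_hasDerivAt (fun z _ => hB x z)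
        ((by fun_prop : Continuous (B' x)).intervalIntegrable _ _), hBbdry, sub_self]
    simp [rectIntegral, hslice]
  rw [rectIntegral_add (by fun_prop) hB', rectIntegral_add hG hA', hA'int, hB'int, add_zero,
    add_zero]

end RectIntegral

abbrev Smooth3 (f : ℝ → ℝ → ℝ → ℝ) : Prop :=
  ContDiff ℝ (⊤ : ℕ∞) (fun p : ℝ × ℝ × ℝ => f p.1 p.2.1 p.2.2)

section Smooth3

variable {f : ℝ → ℝ → ℝ → ℝ}

lemma Smooth3.hasDerivAt_pT (hf : Smooth3 f) (t x z : ℝ) :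
    HasDerivAt (fun s => f s x z) (pT f t x z) t :=
  ((by fun_prop (disch := simp) : Differentiable ℝ fun s => f s x z) t).hasDerivAt

lemma Smooth3.hasDerivAt_pX (hf : Smooth3 f) (t x z : ℝ) :
    HasDerivAt (fun y => f t y z) (pX f t x z) x :=
  ((by fun_prop (disch := simp) : Differentiable ℝ fun y => f t y z) x).hasDerivAt

lemma Smooth3.hasDerivAt_pZ (hf : Smooth3 f) (t x z : ℝ) :
    HasDerivAt (fun w => f t x w) (pZ f t x z) z :=
  ((by fun_prop (disch := simp) : Differentiable ℝ fun w => f t x w) z).hasDerivAt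

lemma Smooth3.smooth3_pT (hf : Smooth3 f) : Smooth3 (pT f) :=
  ContDiff.fderiv_apply (f := fun (p : ℝ × ℝ × ℝ) (s : ℝ) => f s p.2.1 p.2.2)
    (hf.comp (by fun_prop : ContDiff ℝ (⊤ : ℕ∞) fun q : (ℝ × ℝ × ℝ) × ℝ => (q.2, q.1.2.1, q.1.2.2)))
    (by fun_prop) contDiff_const (by simp)

lemma Smooth3.smooth3_pX (hf : Smooth3 f) : Smooth3 (pX f) :=
  ContDiff.fderiv_apply (f := fun (p : ℝ × ℝ × ℝ) (y : ℝ) => f p.1 y p.2.2)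
    (hf.comp (by fun_prop : ContDiff ℝ (⊤ : ℕ∞) fun q : (ℝ × ℝ × ℝ) × ℝ => (q.1.1, q.2, q.1.2.2)))
    (by fun_prop) contDiff_const (by simp)

lemma Smooth3.smooth3_pZ (hf : Smooth3 f) : Smooth3 (pZ f) :=
  ContDiff.fderiv_apply (f := fun (p : ℝ × ℝ × ℝ) (w : ℝ) => f p.1 p.2.1 w)
    (hf.comp (by fun_prop : ContDiff ℝ (⊤ : ℕ∞) fun q : (ℝ × ℝ × ℝ) × ℝ => (q.1.1, q.1.2.1, q.2)))
    (by fun_prop) contDiff_const (by simp)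

lemma pX_add_period {α : ℝ} (hper : ∀ t x z, f t (x + α) z = f t x z) (t x z : ℝ) :
    pX f t (x + α) z = pX f t x z := by
  simp only [pX, ← deriv_comp_add_const, hper]

lemma Smooth3.hasDerivAt_L2sqT (hf : Smooth3 f) (α t : ℝ) :
    HasDerivAt (L2sqT α f) (rectIntegral α fun x z => 2 * f t x z * pT f t x z) t := by
  have := hf.smooth3_pT
  have hsq (x z τ : ℝ) : HasDerivAt (fun s => f s x z ^ 2) (2 * f τ x z * pT f τ x z) τ := by
    simpa using (hf.hasDerivAt_pT τ x z).fun_pow 2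
  refine hasDerivAt_integral_of_continuous
    (F := fun τ x => ∫ z in (0:ℝ)..1, f τ x z ^ 2)
    (F' := fun τ x => ∫ z in (0:ℝ)..1, 2 * f τ x z * pT f τ x z)
    (by fun_prop) (by fun_prop) (fun τ x => ?_) 0 α t
  exact hasDerivAt_integral_of_continuous (by fun_prop) (by fun_prop) (fun τ z => hsq x z τ)
    0 1 τ

end Smooth3

/-- `-zPrimitive (pX v)` is the vertical velocity of the flow. -/
def zPrimitive (f : ℝ → ℝ → ℝ → ℝ) : ℝ → ℝ → ℝ → ℝ :=
  fun t x z => ∫ ξ in (0:ℝ)..z, f t x ξ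

section zPrimitive

variable {f : ℝ → ℝ → ℝ → ℝ}

lemma continuous_zPrimitive (hf : Continuous fun p : ℝ × ℝ × ℝ => f p.1 p.2.1 p.2.2) :
    Continuous fun p : ℝ × ℝ × ℝ => zPrimitive f p.1 p.2.1 p.2.2 :=
  continuous_parametric_intervalIntegral_of_continuous
    (f := fun (p : ℝ × ℝ × ℝ) ξ => f p.1 p.2.1 ξ) (by fun_prop) (by fun_prop)

lemma hasDerivAt_zPrimitive_z {t x : ℝ} (hf : Continuous (f t x)) (z : ℝ) :
    HasDerivAt (zPrimitive f t x) (f t x z) z :=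
  (hf.integral_hasStrictDerivAt 0 z).hasDerivAt

lemma Smooth3.hasDerivAt_zPrimitive_x (hf : Smooth3 f) (t x z : ℝ) :
    HasDerivAt (fun y => zPrimitive f t y z) (zPrimitive (pX f) t x z) x :=
  have := hf.smooth3_pX
  hasDerivAt_integral_of_continuous (F := fun y ξ => f t y ξ) (by fun_prop) (by fun_prop)
    (fun y ξ => hf.hasDerivAt_pX t y ξ) 0 z x

end zPrimitive

lemma L2sqT_nonneg {α : ℝ} (hα : 0 ≤ α) (f : ℝ → ℝ → ℝ → ℝ) (t : ℝ) : 0 ≤ L2sqT α f t :=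
  integral_nonneg hα fun _ _ => integral_nonneg zero_le_one fun _ _ => sq_nonneg _

section EnergyFluxes

variable {v Θ : ℝ → ℝ → ℝ → ℝ}

lemma hasDerivAt_heatFlux_x (hv : Smooth3 v) (hΘ : Smooth3 Θ) (t x z : ℝ) :
    HasDerivAt (fun y => 2 * Θ t y z * pX Θ t y z - v t y z * Θ t y z ^ 2)
      (2 * (pX Θ t x z ^ 2 + Θ t x z * pX (pX Θ) t x z)
        - (pX v t x z * Θ t x z ^ 2 + v t x z * (2 * Θ t x z * pX Θ t x z))) x := by
  refine ((((hΘ.hasDerivAt_pX t x z).const_mul 2).fun_mul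
    (hΘ.smooth3_pX.hasDerivAt_pX t x z)).fun_sub
    ((hv.hasDerivAt_pX t x z).fun_mul ((hΘ.hasDerivAt_pX t x z).fun_pow 2))).congr_deriv ?_
  simp only [Nat.cast_ofNat, show (2:ℕ) - 1 = 1 from rfl, pow_one]
  ring

lemma hasDerivAt_heatFlux_z (hv : Smooth3 v) (hΘ : Smooth3 Θ) (κa t x z : ℝ) :
    HasDerivAt
      (fun z => κa * (2 * Θ t x z * pZ Θ t x z) + zPrimitive (pX v) t x z * Θ t x z ^ 2)
      (κa * (2 * (pZ Θ t x z ^ 2 + Θ t x z * pZ (pZ Θ) t x z))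
        + (pX v t x z * Θ t x z ^ 2
          + zPrimitive (pX v) t x z * (2 * Θ t x z * pZ Θ t x z))) z := by
  have := hv.smooth3_pX
  refine (((((hΘ.hasDerivAt_pZ t x z).const_mul 2).fun_mul
    (hΘ.smooth3_pZ.hasDerivAt_pZ t x z)).const_mul κa).fun_add
    ((hasDerivAt_zPrimitive_z (f := pX v) (by fun_prop) z).fun_mul
      ((hΘ.hasDerivAt_pZ t x z).fun_pow 2))).congr_deriv ?_
  simp only [Nat.cast_ofNat, show (2:ℕ) - 1 = 1 from rfl, pow_one]
  ring

lemma hasDerivAt_momentumFlux_x (hv : Smooth3 v) (hΘ : Smooth3 Θ) (Prx c₁ t x z : ℝ) :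
    HasDerivAt
      (fun y => 2 * Prx * (v t y z * pX v t y z) - 2 * c₁ * (v t y z * zPrimitive Θ t y z)
        - v t y z ^ 3)
      (2 * Prx * (pX v t x z ^ 2 + v t x z * pX (pX v) t x z)
        - 2 * c₁ * (pX v t x z * zPrimitive Θ t x z + v t x z * zPrimitive (pX Θ) t x z)
        - 3 * v t x z ^ 2 * pX v t x z) x := by
  refine (((((hv.hasDerivAt_pX t x z).fun_mul (hv.smooth3_pX.hasDerivAt_pX t x z)).const_mul
    (2 * Prx)).fun_sub (((hv.hasDerivAt_pX t x z).fun_mul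
      (hΘ.hasDerivAt_zPrimitive_x t x z)).const_mul (2 * c₁))).fun_sub
    ((hv.hasDerivAt_pX t x z).fun_pow 3)).congr_deriv ?_
  simp only [Nat.cast_ofNat, show (3:ℕ) - 1 = 2 from rfl]
  ring

lemma hasDerivAt_momentumFlux_z (hv : Smooth3 v) (Prz p t x z : ℝ) :
    HasDerivAt
      (fun z => 2 * Prz * (v t x z * pZ v t x z) + zPrimitive (pX v) t x z * v t x z ^ 2
        - 2 * p * zPrimitive v t x z)
      (2 * Prz * (pZ v t x z ^ 2 + v t x z * pZ (pZ v) t x z)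
        + (pX v t x z * v t x z ^ 2 + zPrimitive (pX v) t x z * (2 * v t x z * pZ v t x z))
        - 2 * p * v t x z) z := by
  have := hv.smooth3_pX
  refine (((((hv.hasDerivAt_pZ t x z).fun_mul (hv.smooth3_pZ.hasDerivAt_pZ t x z)).const_mul
    (2 * Prz)).fun_add ((hasDerivAt_zPrimitive_z (f := pX v) (by fun_prop) z).fun_mul
      ((hv.hasDerivAt_pZ t x z).fun_pow 2))).fun_sub
    ((hasDerivAt_zPrimitive_z (f := v) (by fun_prop) z).const_mul (2 * p))).congr_deriv ?_
  simp only [Nat.cast_ofNat, show (2:ℕ) - 1 = 1 from rfl, pow_one]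
  ring

end EnergyFluxes

namespace NondimSolution

variable {I : Set ℝ} {α Prx Prz κa c₁ c₂ : ℝ} {v Θ : ℝ → ℝ → ℝ → ℝ} {q : ℝ → ℝ → ℝ} {t : ℝ}

lemma integral_pX_v_eq_zero (hs : NondimSolution I α Prx Prz κa c₁ c₂ v Θ q) (ht : t ∈ I)
    (x : ℝ) : ∫ z in (0:ℝ)..1, pX v t x z = 0 := by
  have hv : Smooth3 v := hs.smooth_v
  have := hv.smooth3_pX
  have hd := hasDerivAt_integral_of_continuous (F := fun y z => v t y z) (by fun_prop)
    (by fun_prop) (fun y z => hv.hasDerivAt_pX t y z) 0 1 x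
  simp only [hs.mean_v t ht] at hd
  exact hd.unique (hasDerivAt_const x 0)

lemma heat_energy_eq (hs : NondimSolution I α Prx Prz κa c₁ 0 v Θ q) (hα : 0 ≤ α)
    (ht : t ∈ I) :
    rectIntegral α (fun x z => 2 * Θ t x z * pT Θ t x z)
      = rectIntegral α (fun x z => -(2 * κa) * pZ Θ t x z ^ 2 - 2 * pX Θ t x z ^ 2) := by
  have hv : Smooth3 v := hs.smooth_v
  have hΘ : Smooth3 Θ := hs.smooth_Θ
  have := hv.smooth3_pX
  have := hΘ.smooth3_pX
  have := hΘ.smooth3_pZ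
  have := hΘ.smooth3_pX.smooth3_pX
  have := hΘ.smooth3_pZ.smooth3_pZ
  have := continuous_zPrimitive hv.smooth3_pX.continuous
  have hper (z : ℝ) : Θ t α z = Θ t 0 z ∧ pX Θ t α z = pX Θ t 0 z ∧ v t α z = v t 0 z :=
    ⟨by simpa using hs.periodic_Θ t 0 z, by simpa using pX_add_period hs.periodic_Θ t 0 z,
      by simpa using hs.periodic_v t 0 z⟩
  refine (rectIntegral_congr fun x z hz => ?_).trans <|
    rectIntegral_add_divergence hα (by fun_prop) (by fun_prop) (by fun_prop)
      (hasDerivAt_heatFlux_x hv hΘ t) (hasDerivAt_heatFlux_z hv hΘ κa t)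
      (fun z => by simp only [hper])
      (fun x => by simp [hs.bc_Θ0 t ht x, hs.bc_Θ1 t ht x])
  have h := hs.heat t ht x z hz
  rw [show (∫ ξ in (0:ℝ)..z, pX v t x ξ) = zPrimitive (pX v) t x z from rfl] at h
  linear_combination (2 * Θ t x z) * h

lemma heat_energy_le (hs : NondimSolution I α Prx Prz κa c₁ 0 v Θ q) (hα : 0 ≤ α)
    (hκa : 0 ≤ κa) (ht : t ∈ I) :
    rectIntegral α (fun x z => 2 * Θ t x z * pT Θ t x z) ≤ -(2 * κa) * L2sqT α Θ t := by
  have hΘ : Smooth3 Θ := hs.smooth_Θ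
  have := hΘ.smooth3_pX
  have := hΘ.smooth3_pZ
  have poincare : L2sqT α Θ t ≤ rectIntegral α fun x z => pZ Θ t x z ^ 2 :=
    rectIntegral_mono_of_integral_le hα (by fun_prop) (by fun_prop) fun x =>
      integral_sq_le_integral_deriv_sq_of_eq_zero (hΘ.hasDerivAt_pZ t x) (by fun_prop)
        (hs.bc_Θ0 t ht x)
  calc rectIntegral α (fun x z => 2 * Θ t x z * pT Θ t x z)
      = rectIntegral α (fun x z => -(2 * κa) * pZ Θ t x z ^ 2 - 2 * pX Θ t x z ^ 2) :=
        hs.heat_energy_eq hα ht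
    _ ≤ rectIntegral α (fun x z => -(2 * κa) * pZ Θ t x z ^ 2) :=
        rectIntegral_mono hα (by fun_prop) (by fun_prop) fun x z _ => by
          nlinarith [sq_nonneg (pX Θ t x z)]
    _ = -(2 * κa) * rectIntegral α (fun x z => pZ Θ t x z ^ 2) := rectIntegral_const_mul _
    _ ≤ -(2 * κa) * L2sqT α Θ t := mul_le_mul_of_nonpos_left poincare (by linarith)

lemma momentum_energy_eq (hs : NondimSolution I α Prx Prz κa c₁ c₂ v Θ q) (hα : 0 ≤ α)
    (ht : t ∈ I) :
    rectIntegral α (fun x z => 2 * v t x z * pT v t x z)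
      = rectIntegral α (fun x z => -(2 * Prz) * pZ v t x z ^ 2 - 2 * Prx * pX v t x z ^ 2
          + 2 * c₁ * pX v t x z * zPrimitive Θ t x z) := by
  have hv : Smooth3 v := hs.smooth_v
  have hΘ : Smooth3 Θ := hs.smooth_Θ
  have := hv.smooth3_pX
  have := hv.smooth3_pZ
  have := hv.smooth3_pX.smooth3_pX
  have := hv.smooth3_pZ.smooth3_pZ
  have := continuous_zPrimitive hΘ.continuous
  have := continuous_zPrimitive hΘ.smooth3_pX.continuous
  have := continuous_zPrimitive hv.smooth3_pX.continuous
  have : Continuous fun x => deriv (fun y => q t y) x :=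
    ContDiff.continuous_deriv (n := (⊤ : ℕ∞)) (by have := hs.smooth_q; fun_prop) (by simp)
  have hper (z : ℝ) : v t α z = v t 0 z ∧ pX v t α z = pX v t 0 z
      ∧ zPrimitive Θ t α z = zPrimitive Θ t 0 z :=
    ⟨by simpa using hs.periodic_v t 0 z, by simpa using pX_add_period hs.periodic_v t 0 z,
      integral_congr fun ξ _ => by simpa using hs.periodic_Θ t 0 ξ⟩
  -- The pressure enters through the flux `-2 ∂ₓq ∫₀^z v`, which vanishes at `z = 0, 1` by the
  -- zero-mean condition.
  refine (rectIntegral_congr fun x z hz => ?_).trans <|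
    rectIntegral_add_divergence hα (by fun_prop) (by fun_prop) (by fun_prop)
      (hasDerivAt_momentumFlux_x hv hΘ Prx c₁ t)
      (fun x => hasDerivAt_momentumFlux_z hv Prz (deriv (fun y => q t y) x) t x)
      (fun z => by simp only [hper])
      (fun x => by simp [zPrimitive, hs.bc_v0 t ht x, hs.bc_v1 t ht x, hs.mean_v t ht x,
        hs.integral_pX_v_eq_zero ht x])
  have h := hs.momentum t ht x z hz
  have hWx : pX (fun t x z => ∫ ξ in (0:ℝ)..z, Θ t x ξ) t x z = zPrimitive (pX Θ) t x z :=
    (hΘ.hasDerivAt_zPrimitive_x t x z).deriv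
  rw [hWx, show (∫ ξ in (0:ℝ)..z, pX v t x ξ) = zPrimitive (pX v) t x z from rfl] at h
  linear_combination (2 * v t x z) * h

lemma momentum_energy_le (hs : NondimSolution I α Prx Prz κa c₁ c₂ v Θ q) (hα : 0 ≤ α)
    (hPrx : 0 < Prx) (hPrz : 0 ≤ Prz) (ht : t ∈ I) :
    rectIntegral α (fun x z => 2 * v t x z * pT v t x z)
      ≤ -(2 * Prz) * L2sqT α v t + c₁ ^ 2 / (2 * Prx) * L2sqT α Θ t := by
  have hv : Smooth3 v := hs.smooth_v
  have hΘ : Smooth3 Θ := hs.smooth_Θ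
  have := hv.smooth3_pX
  have := hv.smooth3_pZ
  have := continuous_zPrimitive hΘ.continuous
  have young (a b : ℝ) : -(2 * Prz) * pZ v t a b ^ 2 - 2 * Prx * pX v t a b ^ 2
      + 2 * c₁ * pX v t a b * zPrimitive Θ t a b
      ≤ -(2 * Prz) * pZ v t a b ^ 2 + c₁ ^ 2 / (2 * Prx) * zPrimitive Θ t a b ^ 2 := by
    have hsq : c₁ ^ 2 / (2 * Prx) * zPrimitive Θ t a b ^ 2
        - (2 * c₁ * pX v t a b * zPrimitive Θ t a b - 2 * Prx * pX v t a b ^ 2)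
        = (2 * Prx * pX v t a b - c₁ * zPrimitive Θ t a b) ^ 2 / (2 * Prx) := by
      field_simp
      ring
    have : 0 ≤ (2 * Prx * pX v t a b - c₁ * zPrimitive Θ t a b) ^ 2 / (2 * Prx) := by positivity
    linarith
  have poincare : L2sqT α v t ≤ rectIntegral α fun x z => pZ v t x z ^ 2 :=
    rectIntegral_mono_of_integral_le hα (by fun_prop) (by fun_prop) fun x =>
      integral_sq_le_integral_deriv_sq_of_integral_eq_zero (hv.hasDerivAt_pZ t x) (by fun_prop)
        (hs.mean_v t ht x)
  have hWsq : (rectIntegral α fun x z => zPrimitive Θ t x z ^ 2) ≤ L2sqT α Θ t :=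
    rectIntegral_mono_of_integral_le hα (by fun_prop) (by fun_prop) fun x =>
      integral_sq_primitive_le (g := Θ t x) (by fun_prop)
  calc rectIntegral α (fun x z => 2 * v t x z * pT v t x z)
      = rectIntegral α (fun x z => -(2 * Prz) * pZ v t x z ^ 2 - 2 * Prx * pX v t x z ^ 2
          + 2 * c₁ * pX v t x z * zPrimitive Θ t x z) := hs.momentum_energy_eq hα ht
    _ ≤ rectIntegral α (fun x z => -(2 * Prz) * pZ v t x z ^ 2
          + c₁ ^ 2 / (2 * Prx) * zPrimitive Θ t x z ^ 2) :=
        rectIntegral_mono hα (by fun_prop) (by fun_prop) fun x z _ => young x z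
    _ = -(2 * Prz) * (rectIntegral α fun x z => pZ v t x z ^ 2)
          + c₁ ^ 2 / (2 * Prx) * rectIntegral α fun x z => zPrimitive Θ t x z ^ 2 := by
        rw [rectIntegral_add (by fun_prop) (by fun_prop), rectIntegral_const_mul,
          rectIntegral_const_mul]
    _ ≤ -(2 * Prz) * L2sqT α v t + c₁ ^ 2 / (2 * Prx) * L2sqT α Θ t :=
        add_le_add (mul_le_mul_of_nonpos_left poincare (by linarith))
          (mul_le_mul_of_nonneg_left hWsq (by positivity))

lemma weighted_energy_le (hs : NondimSolution I α Prx Prz κa 1 0 v Θ q) (hα : 0 ≤ α)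
    (hPrx : 0 < Prx) (hPrz : 0 ≤ Prz) (hκa : 0 < κa) (ht : t ∈ I) :
    rectIntegral α (fun x z => 2 * v t x z * pT v t x z)
        + 1 / (Prx * κa) * rectIntegral α (fun x z => 2 * Θ t x z * pT Θ t x z)
      ≤ -(2 * min Prz (3 / 4 * κa)) * (L2sqT α v t + 1 / (Prx * κa) * L2sqT α Θ t) := by
  have hv := hs.momentum_energy_le hα hPrx hPrz ht
  have hΘ := mul_le_mul_of_nonneg_left (hs.heat_energy_le hα hκa.le ht)
    (by positivity : 0 ≤ 1 / (Prx * κa))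
  -- the buoyancy forcing costs a quarter of the weighted heat dissipation
  have hweight : (1 : ℝ) ^ 2 / (2 * Prx) = κa / 2 * (1 / (Prx * κa)) := by
    field_simp
  have hEv := L2sqT_nonneg hα v t
  have hEΘ := mul_nonneg (by positivity : 0 ≤ 1 / (Prx * κa)) (L2sqT_nonneg hα Θ t)
  have hmin₁ := min_le_left Prz (3 / 4 * κa)
  have hmin₂ := min_le_right Prz (3 / 4 * κa)
  rw [hweight] at hv
  nlinarith

end NondimSolution

lemma add_le_of_weighted_add_le {a b a₀ b₀ M e : ℝ} (hM : 0 < M) (ha : 0 ≤ a) (hb : 0 ≤ b)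
    (ha₀ : 0 ≤ a₀) (hb₀ : 0 ≤ b₀) (he : 0 ≤ e) (h : a + M * b ≤ e * (a₀ + M * b₀)) :
    a + b ≤ (1 + 1 / M) * (1 + M) * e * (a₀ + b₀) := by
  have hleft : a + b ≤ (1 + 1 / M) * (a + M * b) := by
    field_simp
    nlinarith [mul_nonneg (mul_nonneg hM.le hM.le) hb]
  have hright : a₀ + M * b₀ ≤ (1 + M) * (a₀ + b₀) := by nlinarith
  calc a + b ≤ (1 + 1 / M) * (e * ((1 + M) * (a₀ + b₀))) := by
        refine hleft.trans (mul_le_mul_of_nonneg_left (h.trans ?_) (by positivity))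
        exact mul_le_mul_of_nonneg_left hright he
    _ = (1 + 1 / M) * (1 + M) * e * (a₀ + b₀) := by ring

theorem L2_decay_equal_boundary_temperatures_general
    (α Prx Prz κa : ℝ)
    (hα : 0 < α) (hPrx : 0 < Prx) (hPrz : 0 < Prz) (hκa : 0 < κa) :
    ∃ lam > (0:ℝ), ∃ C ≥ (1:ℝ), ∀ (v Θ : ℝ → ℝ → ℝ → ℝ) (q : ℝ → ℝ → ℝ),
      NondimSolution (Set.Ici 0) α Prx Prz κa 1 0 v Θ q →
      (∀ t ≥ (0:ℝ),
        L2sqT α v t + L2sqT α Θ t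
          ≤ C * Real.exp (-(2 * lam) * t) * (L2sqT α v 0 + L2sqT α Θ 0))
      ∧ (∀ t ≥ (0:ℝ), L2sqT α Θ t ≤ Real.exp (-lam * t) * L2sqT α Θ 0) := by
  set M := 1 / (Prx * κa)
  have hM : 0 < M := by positivity
  set lam := min Prz (3 / 4 * κa)
  refine ⟨lam, lt_min hPrz (by positivity), (1 + 1 / M) * (1 + M),
    by nlinarith [one_div_pos.2 hM], fun v Θ q hs => ?_⟩
  have hv : Smooth3 v := hs.smooth_v
  have hΘ : Smooth3 Θ := hs.smooth_Θ
  have hE (f : ℝ → ℝ → ℝ → ℝ) (s : ℝ) : 0 ≤ L2sqT α f s := L2sqT_nonneg hα.le f s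
  refine ⟨fun t ht => ?_, fun t ht => ?_⟩
  · refine add_le_of_weighted_add_le hM (hE v t) (hE Θ t) (hE v 0) (hE Θ 0) (exp_pos _).le ?_
    exact le_exp_mul_of_hasDerivAt_le (F := fun t => L2sqT α v t + M * L2sqT α Θ t)
      (fun s _ => (hv.hasDerivAt_L2sqT α s).add ((hΘ.hasDerivAt_L2sqT α s).const_mul M))
      (fun s hs' => hs.weighted_energy_le hα.le hPrx hPrz.le hκa hs') ht
  · calc L2sqT α Θ t ≤ exp (-(2 * κa) * t) * L2sqT α Θ 0 :=
          le_exp_mul_of_hasDerivAt_le (fun s _ => hΘ.hasDerivAt_L2sqT α s)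
            (fun s hs' => hs.heat_energy_le hα.le hκa.le hs') ht
      _ ≤ exp (-lam * t) * L2sqT α Θ 0 :=
        mul_le_mul_of_nonneg_right
          (exp_le_exp.2 (by nlinarith [min_le_right Prz (3 / 4 * κa)])) (hE Θ 0)

/-- L² exponential decay with equal boundary temperatures (s = 0). -/
theorem L2_decay_equal_boundary_temperatures
    (α Prx Prz κa R : ℝ)
    (hα : 0 < α) (hPrx : 0 < Prx) (hPrz : 0 < Prz) (hκa : 0 < κa) (hR : 0 ≤ R) :
    ∃ lam > (0:ℝ), ∃ C ≥ (1:ℝ), ∀ (v Θ : ℝ → ℝ → ℝ → ℝ) (q : ℝ → ℝ → ℝ),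
      NondimSolution (Set.Ici 0) α Prx Prz κa 1 0 v Θ q →
      (∀ t ≥ (0:ℝ),
        L2sqT α v t + L2sqT α Θ t
          ≤ C * Real.exp (-(2 * lam) * t) * (L2sqT α v 0 + L2sqT α Θ 0))
      ∧ (∀ t ≥ (0:ℝ), L2sqT α Θ t ≤ Real.exp (-lam * t) * L2sqT α Θ 0) :=
  L2_decay_equal_boundary_temperatures_general α Prx Prz κa hα hPrx hPrz hκa
end
end

section
/- Principle of exchange of stabilities for the explicit eigenvalues: Assume R > 0 and that the minimum defining R_c is attained at a unique integer m_c ≥ 1, i.e. π⁴(4 Pr_x m_c²/α² + Pr_z)(1 + κ_a α²/(4 m_c²)) < π⁴(4 Pr_x m²/α² + Pr_z)(1 + κ_a α²/(4 m²)) for every integer m ≥ 1 with m ≠ m_c. Then: (1) β_{m_c,1}^+ > 0 if R > R_c, β_{m_c,1}^+ = 0 if R = R_c, and β_{m_c,1}^+ < 0 if R < R_c; (2) β_{m_c,1}^− < 0; (3) if R ≤ R_c, then β_{m,n}^+ < 0 and β_{m,n}^− < 0 for every pair of integers (m, n) with m ≥ 0, n ≥ 1 and (m, n) ≠ (m_c,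 1). -/
noncomputable section

open Real

/-- Critical Rayleigh number R_c = (min_{m ≥ 1} π⁴ (4 Pr_x m²/α² + Pr_z)(1 + κ_a α²/(4 m²)))^{1/2}. -/
def Rcrit (α Prx Prz κa : ℝ) : ℝ :=
  Real.sqrt (⨅ m : ℕ+,
    π ^ 4 * (4 * Prx * ((m : ℕ) : ℝ) ^ 2 / α ^ 2 + Prz)
      * (1 + κa * α ^ 2 / (4 * ((m : ℕ) : ℝ) ^ 2)))

/-- a_{m,n} = 4π² Pr_x m²/α² + π² Pr_z n². -/
def eigA (α Prx Prz : ℝ) (m n : ℕ) : ℝ :=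
  4 * π ^ 2 * Prx * (m : ℝ) ^ 2 / α ^ 2 + π ^ 2 * Prz * (n : ℝ) ^ 2

/-- b_{m,n} = 4π² m²/α² + π² κ_a n². -/
def eigB (α κa : ℝ) (m n : ℕ) : ℝ :=
  4 * π ^ 2 * (m : ℝ) ^ 2 / α ^ 2 + π ^ 2 * κa * (n : ℝ) ^ 2

/-- A_{m,n} = (a_{m,n} + b_{m,n})/2. -/
def eigCapA (α Prx Prz κa : ℝ) (m n : ℕ) : ℝ :=
  (eigA α Prx Prz m n + eigB α κa m n) / 2

/-- C_{m,n} = a_{m,n} b_{m,n} − 4 R² m²/(α² n²). -/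
def eigCapC (α Prx Prz κa R : ℝ) (m n : ℕ) : ℝ :=
  eigA α Prx Prz m n * eigB α κa m n - 4 * R ^ 2 * (m : ℝ) ^ 2 / (α ^ 2 * (n : ℝ) ^ 2)

/-- β_{m,n}^+ = −A_{m,n} + √(A_{m,n}² − C_{m,n}). -/
def betaPlus (α Prx Prz κa R : ℝ) (m n : ℕ) : ℝ :=
  -eigCapA α Prx Prz κa m n
    + Real.sqrt (eigCapA α Prx Prz κa m n ^ 2 - eigCapC α Prx Prz κa R m n)

/-- β_{m,n}^− = −A_{m,n} − √(A_{m,n}² − C_{m,n}). -/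
def betaMinus (α Prx Prz κa R : ℝ) (m n : ℕ) : ℝ :=
  -eigCapA α Prx Prz κa m n
    - Real.sqrt (eigCapA α Prx Prz κa m n ^ 2 - eigCapC α Prx Prz κa R m n)

private lemma numer_mono (Prx Prz κa α M ν : ℝ) (hPrx : 0 < Prx) (hPrz : 0 < Prz)
    (hκa : 0 < κa) (hα : 0 < α) (hM : 1 ≤ M) (hν : 1 ≤ ν) :
    π ^ 4 * (4 * Prx * M ^ 2 + Prz * α ^ 2) * (4 * M ^ 2 + κa * α ^ 2)
      ≤ π ^ 4 * ν ^ 2 * (4 * Prx * M ^ 2 + Prz * α ^ 2 * ν ^ 2)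
        * (4 * M ^ 2 + κa * α ^ 2 * ν ^ 2) := by
  have hπ4 : (0:ℝ) < π ^ 4 := by positivity
  have hν2 : (1:ℝ) ≤ ν ^ 2 := by nlinarith
  have hB1 : (0:ℝ) < Prz * α ^ 2 := by positivity
  have hB2 : (0:ℝ) < κa * α ^ 2 := by positivity
  have hX : 4 * Prx * M ^ 2 + Prz * α ^ 2 ≤ 4 * Prx * M ^ 2 + Prz * α ^ 2 * ν ^ 2 := by
    nlinarith
  have hY : 4 * M ^ 2 + κa * α ^ 2 ≤ 4 * M ^ 2 + κa * α ^ 2 * ν ^ 2 := by nlinarith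
  have hXpos : (0:ℝ) < 4 * Prx * M ^ 2 + Prz * α ^ 2 := by nlinarith [sq_nonneg M]
  have hYpos : (0:ℝ) < 4 * M ^ 2 + κa * α ^ 2 := by nlinarith [sq_nonneg M]
  have h1 : π ^ 4 * (4 * Prx * M ^ 2 + Prz * α ^ 2) * (4 * M ^ 2 + κa * α ^ 2)
      ≤ π ^ 4 * (4 * Prx * M ^ 2 + Prz * α ^ 2 * ν ^ 2) * (4 * M ^ 2 + κa * α ^ 2 * ν ^ 2) := by
    gcongr
  have h2 : π ^ 4 * (4 * Prx * M ^ 2 + Prz * α ^ 2 * ν ^ 2) * (4 * M ^ 2 + κa * α ^ 2 * ν ^ 2)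
      ≤ ν ^ 2 * (π ^ 4 * (4 * Prx * M ^ 2 + Prz * α ^ 2 * ν ^ 2)
          * (4 * M ^ 2 + κa * α ^ 2 * ν ^ 2)) := by
    apply le_mul_of_one_le_left _ hν2
    have h3 : (0:ℝ) < 4 * Prx * M ^ 2 + Prz * α ^ 2 * ν ^ 2 := by linarith
    have h4 : (0:ℝ) < 4 * M ^ 2 + κa * α ^ 2 * ν ^ 2 := by linarith
    positivity
  nlinarith [h1, h2]

private lemma numer_mono_strict (Prx Prz κa α M ν : ℝ) (hPrx : 0 < Prx) (hPrz : 0 < Prz)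
    (hκa : 0 < κa) (hα : 0 < α) (hM : 1 ≤ M) (hν : 2 ≤ ν) :
    π ^ 4 * (4 * Prx * M ^ 2 + Prz * α ^ 2) * (4 * M ^ 2 + κa * α ^ 2)
      < π ^ 4 * ν ^ 2 * (4 * Prx * M ^ 2 + Prz * α ^ 2 * ν ^ 2)
        * (4 * M ^ 2 + κa * α ^ 2 * ν ^ 2) := by
  have hπ4 : (0:ℝ) < π ^ 4 := by positivity
  have hν1 : (1:ℝ) ≤ ν := by linarith
  have hν2 : (1:ℝ) < ν ^ 2 := by nlinarith
  have hB1 : (0:ℝ) < Prz * α ^ 2 := by positivity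
  have hB2 : (0:ℝ) < κa * α ^ 2 := by positivity
  have hX : 4 * Prx * M ^ 2 + Prz * α ^ 2 ≤ 4 * Prx * M ^ 2 + Prz * α ^ 2 * ν ^ 2 := by
    nlinarith
  have hY : 4 * M ^ 2 + κa * α ^ 2 ≤ 4 * M ^ 2 + κa * α ^ 2 * ν ^ 2 := by nlinarith
  have hXpos : (0:ℝ) < 4 * Prx * M ^ 2 + Prz * α ^ 2 := by nlinarith [sq_nonneg M]
  have hYpos : (0:ℝ) < 4 * M ^ 2 + κa * α ^ 2 := by nlinarith [sq_nonneg M]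
  have h1 : π ^ 4 * (4 * Prx * M ^ 2 + Prz * α ^ 2) * (4 * M ^ 2 + κa * α ^ 2)
      ≤ π ^ 4 * (4 * Prx * M ^ 2 + Prz * α ^ 2 * ν ^ 2) * (4 * M ^ 2 + κa * α ^ 2 * ν ^ 2) := by
    gcongr
  have h2 : π ^ 4 * (4 * Prx * M ^ 2 + Prz * α ^ 2 * ν ^ 2) * (4 * M ^ 2 + κa * α ^ 2 * ν ^ 2)
      < ν ^ 2 * (π ^ 4 * (4 * Prx * M ^ 2 + Prz * α ^ 2 * ν ^ 2)
          * (4 * M ^ 2 + κa * α ^ 2 * ν ^ 2)) := by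
    apply lt_mul_of_one_lt_left _ hν2
    have h3 : (0:ℝ) < 4 * Prx * M ^ 2 + Prz * α ^ 2 * ν ^ 2 := by linarith
    have h4 : (0:ℝ) < 4 * M ^ 2 + κa * α ^ 2 * ν ^ 2 := by linarith
    positivity
  nlinarith [h1, h2]

private def fRay (α Prx Prz κa : ℝ) (k : ℕ) : ℝ :=
  π ^ 4 * (4 * Prx * (k : ℝ) ^ 2 / α ^ 2 + Prz) * (1 + κa * α ^ 2 / (4 * (k : ℝ) ^ 2))


set_option maxHeartbeats 1000000 in
/-- Principle of exchange of stabilities for the explicit eigenvalues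
β_{m,n}^± of the linearization, assuming R > 0 and a unique minimizing wavenumber m_c. -/
theorem exchange_of_stabilities
    (α Prx Prz κa R : ℝ)
    (hα : 0 < α) (hPrx : 0 < Prx) (hPrz : 0 < Prz) (hκa : 0 < κa) (hR : 0 < R)
    (mc : ℕ) (hmc1 : 1 ≤ mc)
    (hmcUnique : ∀ m : ℕ, 1 ≤ m → m ≠ mc →
      π ^ 4 * (4 * Prx * (mc : ℝ) ^ 2 / α ^ 2 + Prz)
          * (1 + κa * α ^ 2 / (4 * (mc : ℝ) ^ 2))
        < π ^ 4 * (4 * Prx * (m : ℝ) ^ 2 / α ^ 2 + Prz)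
          * (1 + κa * α ^ 2 / (4 * (m : ℝ) ^ 2))) :
    ((Rcrit α Prx Prz κa < R → 0 < betaPlus α Prx Prz κa R mc 1) ∧
     (R = Rcrit α Prx Prz κa → betaPlus α Prx Prz κa R mc 1 = 0) ∧
     (R < Rcrit α Prx Prz κa → betaPlus α Prx Prz κa R mc 1 < 0)) ∧
    (betaMinus α Prx Prz κa R mc 1 < 0) ∧
    (R ≤ Rcrit α Prx Prz κa → ∀ m n : ℕ, 1 ≤ n → (m, n) ≠ (mc, 1) →
      betaPlus α Prx Prz κa R m n < 0 ∧ betaMinus α Prx Prz κa R m n < 0) := by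
  have hπ : (0:ℝ) < π := Real.pi_pos
  have hπ4 : (0:ℝ) < π ^ 4 := by positivity
  have hαne : α ≠ 0 := ne_of_gt hα
  have hf : ∀ k : ℕ, fRay α Prx Prz κa k = π ^ 4 * (4 * Prx * (k : ℝ) ^ 2 / α ^ 2 + Prz)
      * (1 + κa * α ^ 2 / (4 * (k : ℝ) ^ 2)) := fun k => rfl
  have hfnonneg : ∀ k : ℕ, 0 ≤ fRay α Prx Prz κa k := by
    intro k
    have h1 : (0:ℝ) ≤ 4 * Prx * (k:ℝ) ^ 2 / α ^ 2 := by positivity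
    have h2 : (0:ℝ) ≤ κa * α ^ 2 / (4 * (k:ℝ) ^ 2) := by positivity
    rw [hf]
    apply mul_nonneg (mul_nonneg hπ4.le (by linarith)) (by linarith)
  have hfpos : 0 < fRay α Prx Prz κa mc := by
    have h1 : (0:ℝ) ≤ 4 * Prx * (mc:ℝ) ^ 2 / α ^ 2 := by positivity
    have h2 : (0:ℝ) ≤ κa * α ^ 2 / (4 * (mc:ℝ) ^ 2) := by positivity
    rw [hf]
    apply mul_pos (mul_pos hπ4 (by linarith)) (by linarith)
  have hfmcle : ∀ k : ℕ, 1 ≤ k → fRay α Prx Prz κa mc ≤ fRay α Prx Prz κa k := by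
    intro k hk
    rcases eq_or_ne k mc with h | h
    · exact le_of_eq (by rw [h])
    · exact (hmcUnique k hk h).le
  have hinfval : (⨅ m : ℕ+,
      π ^ 4 * (4 * Prx * ((m : ℕ) : ℝ) ^ 2 / α ^ 2 + Prz)
        * (1 + κa * α ^ 2 / (4 * ((m : ℕ) : ℝ) ^ 2))) = fRay α Prx Prz κa mc := by
    apply le_antisymm
    · exact ciInf_le ⟨0, by rintro x ⟨p, rfl⟩; exact hfnonneg p⟩
        (⟨mc, hmc1⟩ : ℕ+)
    · exact le_ciInf fun p => hfmcle (p : ℕ) p.one_le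
  have hRc : Rcrit α Prx Prz κa = Real.sqrt (fRay α Prx Prz κa mc) := by
    rw [Rcrit, hinfval]
  have hRcpos : 0 < Rcrit α Prx Prz κa := by
    rw [hRc]; exact Real.sqrt_pos.2 hfpos
  have hRc2 : Rcrit α Prx Prz κa ^ 2 = fRay α Prx Prz κa mc := by
    rw [hRc, Real.sq_sqrt hfpos.le]
  have hApos : ∀ m n : ℕ, 1 ≤ n → 0 < eigCapA α Prx Prz κa m n := by
    intro m n hn
    have hnR : (0:ℝ) < (n:ℝ) := by exact_mod_cast hn
    have h1 : (0:ℝ) ≤ 4 * π ^ 2 * Prx * (m:ℝ) ^ 2 / α ^ 2 := by positivity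
    have h2 : (0:ℝ) < π ^ 2 * Prz * (n:ℝ) ^ 2 :=
      mul_pos (mul_pos (by positivity) hPrz) (pow_pos hnR 2)
    have h3 : (0:ℝ) ≤ 4 * π ^ 2 * (m:ℝ) ^ 2 / α ^ 2 := by positivity
    have h4 : (0:ℝ) < π ^ 2 * κa * (n:ℝ) ^ 2 :=
      mul_pos (mul_pos (by positivity) hκa) (pow_pos hnR 2)
    unfold eigCapA eigA eigB
    linarith
  have hBPneg : ∀ m n : ℕ, 1 ≤ n → 0 < eigCapC α Prx Prz κa R m n →
      betaPlus α Prx Prz κa R m n < 0 := by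
    intro m n hn hC
    have hA := hApos m n hn
    have hs : Real.sqrt (eigCapA α Prx Prz κa m n ^ 2 - eigCapC α Prx Prz κa R m n)
        < eigCapA α Prx Prz κa m n := by
      rw [Real.sqrt_lt' hA]; linarith
    unfold betaPlus; linarith
  have hBMneg : ∀ m n : ℕ, 1 ≤ n → betaMinus α Prx Prz κa R m n < 0 := by
    intro m n hn
    have hA := hApos m n hn
    have := Real.sqrt_nonneg (eigCapA α Prx Prz κa m n ^ 2 - eigCapC α Prx Prz κa R m n)
    unfold betaMinus; linarith
  have hCform : ∀ m n : ℕ, 1 ≤ n → eigCapC α Prx Prz κa R m n =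
      (π ^ 4 * (n:ℝ) ^ 2 * (4 * Prx * (m:ℝ) ^ 2 + Prz * α ^ 2 * (n:ℝ) ^ 2)
          * (4 * (m:ℝ) ^ 2 + κa * α ^ 2 * (n:ℝ) ^ 2)
        - 4 * R ^ 2 * (m:ℝ) ^ 2 * α ^ 2) / (α ^ 4 * (n:ℝ) ^ 2) := by
    intro m n hn
    have hnne : (n:ℝ) ≠ 0 := by positivity
    unfold eigCapC eigA eigB
    field_simp
  have hfP : ∀ m : ℕ, 1 ≤ m → fRay α Prx Prz κa m * (4 * (m:ℝ) ^ 2 * α ^ 2) =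
      π ^ 4 * (4 * Prx * (m:ℝ) ^ 2 + Prz * α ^ 2) * (4 * (m:ℝ) ^ 2 + κa * α ^ 2) := by
    intro m hm
    have hmne : (m:ℝ) ≠ 0 := by
      have : (0:ℝ) < (m:ℝ) := by exact_mod_cast hm
      exact ne_of_gt this
    rw [hf]
    field_simp
  have hmcR : (1:ℝ) ≤ (mc:ℝ) := by exact_mod_cast hmc1
  have hQ := hfP mc hmc1
  have h4mc : (0:ℝ) < 4 * (mc:ℝ) ^ 2 * α ^ 2 := by positivity
  constructor
  · refine ⟨?_, ?_, ?_⟩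
    · -- Rcrit < R ⇒ β+ > 0
      intro hlt
      have hR2 : fRay α Prx Prz κa mc < R ^ 2 := by
        rw [← hRc2]; exact pow_lt_pow_left₀ hlt hRcpos.le (by norm_num)
      have hC : eigCapC α Prx Prz κa R mc 1 < 0 := by
        rw [hCform mc 1 le_rfl]
        apply div_neg_of_neg_of_pos _ (by positivity)
        push_cast
        norm_num
        nlinarith [mul_lt_mul_of_pos_right hR2 h4mc]
      have hA := hApos mc 1 le_rfl
      have hs : eigCapA α Prx Prz κa mc 1
          < Real.sqrt (eigCapA α Prx Prz κa mc 1 ^ 2 - eigCapC α Prx Prz κa R mc 1) := by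
        rw [Real.lt_sqrt hA.le]; linarith
      unfold betaPlus; linarith
    · -- R = Rcrit ⇒ β+ = 0
      intro heq
      have hfmcR : fRay α Prx Prz κa mc = R ^ 2 := by rw [heq, hRc2]
      have hC : eigCapC α Prx Prz κa R mc 1 = 0 := by
        rw [hCform mc 1 le_rfl, div_eq_zero_iff]
        left
        push_cast
        linear_combination (-1 : ℝ) * hQ + (4 * (mc:ℝ) ^ 2 * α ^ 2) * hfmcR
      have hA := hApos mc 1 le_rfl
      unfold betaPlus
      rw [hC, sub_zero, Real.sqrt_sq hA.le]
      ring
    · -- R < Rcrit ⇒ β+ < 0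
      intro hlt
      have hR2 : R ^ 2 < fRay α Prx Prz κa mc := by
        rw [← hRc2]; exact pow_lt_pow_left₀ hlt hR.le (by norm_num)
      apply hBPneg mc 1 le_rfl
      rw [hCform mc 1 le_rfl]
      apply div_pos _ (by positivity)
      push_cast
      norm_num
      nlinarith [mul_lt_mul_of_pos_right hR2 h4mc]
  constructor
  · exact hBMneg mc 1 le_rfl
  · intro hRle m n hn hne
    refine ⟨?_, hBMneg m n hn⟩
    have hnR : (1:ℝ) ≤ (n:ℝ) := by exact_mod_cast hn
    have hnpos : (0:ℝ) < (n:ℝ) := by linarith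
    have hR2 : R ^ 2 ≤ fRay α Prx Prz κa mc := by
      rw [← hRc2]; exact pow_le_pow_left₀ hR.le hRle 2
    apply hBPneg m n hn
    rw [hCform m n hn]
    apply div_pos _ (by positivity)
    rcases Nat.eq_zero_or_pos m with hm0 | hm1
    · subst hm0
      push_cast
      norm_num
      positivity
    · have hmR : (1:ℝ) ≤ (m:ℝ) := by exact_mod_cast hm1
      have h4 : (0:ℝ) ≤ 4 * (m:ℝ) ^ 2 * α ^ 2 := by positivity
      have hkey : 4 * R ^ 2 * (m:ℝ) ^ 2 * α ^ 2 ≤ fRay α Prx Prz κa mc * (4 * (m:ℝ) ^ 2 * α ^ 2) := by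
        nlinarith [mul_nonneg (sub_nonneg.2 hR2) h4]
      rcases eq_or_ne m mc with hm | hm
      · -- m = mc, so n ≥ 2
        have hn2 : 2 ≤ n := by
          rcases Nat.lt_or_ge n 2 with h | h
          · have hn1 : n = 1 := by omega
            exact absurd (by rw [hm, hn1]) hne
          · exact h
        have hn2R : (2:ℝ) ≤ (n:ℝ) := by exact_mod_cast hn2
        have hmono := numer_mono_strict Prx Prz κa α (m:ℝ) (n:ℝ) hPrx hPrz hκa hα hmR hn2R
        have heq : fRay α Prx Prz κa mc * (4 * (m:ℝ) ^ 2 * α ^ 2)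
            = π ^ 4 * (4 * Prx * (m:ℝ) ^ 2 + Prz * α ^ 2)
              * (4 * (m:ℝ) ^ 2 + κa * α ^ 2) := by
          rw [hm]; exact hQ
        linarith
      · -- m ≠ mc
        have hflt : fRay α Prx Prz κa mc < fRay α Prx Prz κa m := hmcUnique m hm1 hm
        have h4' : (0:ℝ) < 4 * (m:ℝ) ^ 2 * α ^ 2 := by positivity
        have hstep : fRay α Prx Prz κa mc * (4 * (m:ℝ) ^ 2 * α ^ 2) < fRay α Prx Prz κa m * (4 * (m:ℝ) ^ 2 * α ^ 2) :=
          mul_lt_mul_of_pos_right hflt h4'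
        have heq := hfP m hm1
        have hmono := numer_mono Prx Prz κa α (m:ℝ) (n:ℝ) hPrx hPrz hκa hα hmR hnR
        linarith
end
end

section
/- Anisotropic L_x² L_z^∞ estimate under zero vertical mean: Let α > 0, D = (0, α) × (0, 1), and let f : ℝ × [0, 1] → ℝ be C¹ and periodic in x with period α, satisfying ∫₀¹ f(x, z) dz = 0 for every x ∈ ℝ. Then there exists a constant C > 0 (one may take C = 2) such that ∫₀^α (sup_{z ∈ [0,1]} |f(x,z)|)² dx ≤ C ‖f‖_{L²(D)} ‖∂_z f‖_{L²(D)}. -/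
noncomputable section

open Real

/-- L² norm over D = (0, α) × (0, 1) of a function of (x, z). -/
def L2norm (α : ℝ) (f : ℝ → ℝ → ℝ) : ℝ :=
  Real.sqrt (∫ x in (0:ℝ)..α, ∫ z in (0:ℝ)..1, (f x z) ^ 2)

/-- Cauchy–Schwarz inequality for interval integrals of continuous functions. -/
lemma cs_interval {a b : ℝ} (hab : a ≤ b) {u v : ℝ → ℝ}
    (hu : ContinuousOn u (Set.Icc a b)) (hv : ContinuousOn v (Set.Icc a b)) :
    (∫ t in a..b, u t * v t) ≤
      Real.sqrt (∫ t in a..b, u t ^ 2) * Real.sqrt (∫ t in a..b, v t ^ 2) := by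
  have huIcc : Set.uIcc a b = Set.Icc a b := Set.uIcc_of_le hab
  have hu2 : IntervalIntegrable (fun t => u t ^ 2) MeasureTheory.volume a b :=
    ((hu.pow 2).mono huIcc.subset).intervalIntegrable
  have hv2 : IntervalIntegrable (fun t => v t ^ 2) MeasureTheory.volume a b :=
    ((hv.pow 2).mono huIcc.subset).intervalIntegrable
  have huv : IntervalIntegrable (fun t => u t * v t) MeasureTheory.volume a b :=
    ((hu.mul hv).mono huIcc.subset).intervalIntegrable
  set A := ∫ t in a..b, u t ^ 2 with hA
  set B := ∫ t in a..b, u t * v t with hB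
  set C := ∫ t in a..b, v t ^ 2 with hC
  have hA0 : 0 ≤ A := intervalIntegral.integral_nonneg hab (fun t _ => sq_nonneg _)
  have hC0 : 0 ≤ C := intervalIntegral.integral_nonneg hab (fun t _ => sq_nonneg _)
  have key : B ^ 2 ≤ A * C := by
    have hd := discrim_le_zero (a := C) (b := -2 * B) (c := A) ?_
    · rw [discrim] at hd; nlinarith
    · intro lam
      have h1 : (0:ℝ) ≤ ∫ t in a..b, (lam * v t - u t) ^ 2 :=
        intervalIntegral.integral_nonneg hab (fun t _ => sq_nonneg _)
      have h2 : (∫ t in a..b, (lam * v t - u t) ^ 2)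
          = lam ^ 2 * C - 2 * lam * B + A := by
        have congr1 : (∫ t in a..b, (lam * v t - u t) ^ 2)
            = ∫ t in a..b, (lam ^ 2 * v t ^ 2 - 2 * lam * (u t * v t) + u t ^ 2) := by
          apply intervalIntegral.integral_congr; intro t _; ring
        rw [congr1, intervalIntegral.integral_add ((hv2.const_mul _).sub (huv.const_mul _)) hu2,
          intervalIntegral.integral_sub (hv2.const_mul _) (huv.const_mul _),
          intervalIntegral.integral_const_mul, intervalIntegral.integral_const_mul]
      nlinarith [h1, h2]
  calc B ≤ |B| := le_abs_self B
    _ = Real.sqrt (B ^ 2) := (Real.sqrt_sq_eq_abs B).symm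
    _ ≤ Real.sqrt (A * C) := Real.sqrt_le_sqrt key
    _ = Real.sqrt A * Real.sqrt C := Real.sqrt_mul hA0 _

/-- A continuous function on [0,1] with zero mean has a zero. -/
lemma exists_zero_of_mean_zero (g : ℝ → ℝ) (hg : Continuous g)
    (hmean : (∫ z in (0:ℝ)..1, g z) = 0) :
    ∃ z₀ ∈ Set.Icc (0:ℝ) 1, g z₀ = 0 := by
  by_contra h
  push_neg at h
  have h0 : g 0 ≠ 0 := h 0 (Set.left_mem_Icc.mpr zero_le_one)
  have hIcc : ∀ z ∈ Set.Icc (0:ℝ) 1, Set.uIcc 0 z ⊆ Set.Icc (0:ℝ) 1 := fun z hz =>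
    Set.uIcc_subset_Icc (Set.left_mem_Icc.mpr zero_le_one) hz
  rcases h0.lt_or_gt with hneg | hpos
  · have hall : ∀ z ∈ Set.Icc (0:ℝ) 1, g z < 0 := by
      intro z hz
      rcases (h z hz).lt_or_gt with hn | hp
      · exact hn
      · exfalso
        have hmem : (0:ℝ) ∈ Set.uIcc (g 0) (g z) := Set.mem_uIcc.mpr (Or.inl ⟨hneg.le, hp.le⟩)
        obtain ⟨c, hc, hc0⟩ := intermediate_value_uIcc (hg.continuousOn) hmem
        exact h c (hIcc z hz hc) hc0
    have hpos' : (0:ℝ) < ∫ z in (0:ℝ)..1, -g z := by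
      apply intervalIntegral.intervalIntegral_pos_of_pos_on
      · exact (hg.neg.intervalIntegrable 0 1)
      · intro z hz; simpa using hall z ⟨hz.1.le, hz.2.le⟩
      · exact zero_lt_one
    rw [intervalIntegral.integral_neg, hmean] at hpos'
    simp at hpos'
  · have hall : ∀ z ∈ Set.Icc (0:ℝ) 1, 0 < g z := by
      intro z hz
      rcases (h z hz).lt_or_gt with hn | hp
      · exfalso
        have hmem : (0:ℝ) ∈ Set.uIcc (g 0) (g z) := Set.mem_uIcc.mpr (Or.inr ⟨hn.le, hpos.le⟩)
        obtain ⟨c, hc, hc0⟩ := intermediate_value_uIcc (hg.continuousOn) hmem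
        exact h c (hIcc z hz hc) hc0
      · exact hp
    have hpos' : (0:ℝ) < ∫ z in (0:ℝ)..1, g z := by
      apply intervalIntegral.intervalIntegral_pos_of_pos_on
      · exact hg.intervalIntegrable 0 1
      · intro z hz; exact hall z ⟨hz.1.le, hz.2.le⟩
      · exact zero_lt_one
    rw [hmean] at hpos'
    exact lt_irrefl 0 hpos'

/-- Anisotropic L_x² L_z^∞ estimate under zero vertical mean, for C¹
functions on ℝ × [0,1], periodic in x with period α. -/
theorem Lx2Lzinfty_estimate_zero_vertical_mean (α : ℝ) (hα : 0 < α) :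
    ∃ C > (0:ℝ), ∀ f : ℝ → ℝ → ℝ,
      ContDiff ℝ 1 (fun p : ℝ × ℝ => f p.1 p.2) →
      (∀ x z, f (x + α) z = f x z) →
      (∀ x : ℝ, (∫ z in (0:ℝ)..1, f x z) = 0) →
      (∫ x in (0:ℝ)..α, (⨆ z : Set.Icc (0:ℝ) 1, |f x (z : ℝ)|) ^ 2)
        ≤ C * L2norm α f * L2norm α (pz2 f) := by
  refine ⟨2, two_pos, ?_⟩
  intro f hf _hper hmean
  -- Basic continuity facts
  set F : ℝ × ℝ → ℝ := fun p => f p.1 p.2 with hFdef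
  have hFc : Continuous F := hf.continuous
  set G : ℝ × ℝ → ℝ := fun p => fderiv ℝ F p (0, 1) with hGdef
  have hGc : Continuous G := (hf.continuous_fderiv one_ne_zero).clm_apply continuous_const
  have hderivAt : ∀ x z, HasDerivAt (fun w => f x w) (G (x, z)) z := by
    intro x z
    have h1 : HasFDerivAt F (fderiv ℝ F (x, z)) (x, z) :=
      (hf.differentiable one_ne_zero).differentiableAt.hasFDerivAt
    have h2 : HasDerivAt (fun w : ℝ => ((x, w) : ℝ × ℝ)) ((0 : ℝ), (1 : ℝ)) z :=
      (hasDerivAt_const z x).prodMk (hasDerivAt_id z)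
    exact h1.comp_hasDerivAt z h2
  have hpz : ∀ x z, pz2 f x z = G (x, z) := fun x z => (hderivAt x z).deriv
  have hgc : Continuous (fun p : ℝ × ℝ => pz2 f p.1 p.2) := by
    have : (fun p : ℝ × ℝ => pz2 f p.1 p.2) = G := by
      funext p; exact hpz p.1 p.2
    rw [this]; exact hGc
  have hfx : ∀ x, Continuous (fun z => f x z) := fun x =>
    hFc.comp (Continuous.prodMk_right x)
  have hgx : ∀ x, Continuous (fun z => pz2 f x z) := fun x =>
    hgc.comp (Continuous.prodMk_right x)
  have hderivAt' : ∀ x z, HasDerivAt (fun w => f x w) (pz2 f x z) z := by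
    intro x z; rw [hpz]; exact hderivAt x z
  -- The sup function M and the key auxiliary integrals
  set M : ℝ → ℝ := fun x => ⨆ z : Set.Icc (0:ℝ) 1, |f x (z : ℝ)| with hMdef
  set Φ : ℝ → ℝ := fun x => ∫ z in (0:ℝ)..1, |f x z| * |pz2 f x z| with hΦdef
  set A : ℝ → ℝ := fun x => ∫ z in (0:ℝ)..1, (f x z) ^ 2 with hAdef
  set B : ℝ → ℝ := fun x => ∫ z in (0:ℝ)..1, (pz2 f x z) ^ 2 with hBdef
  have hΦ0 : ∀ x, 0 ≤ Φ x := fun x =>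
    intervalIntegral.integral_nonneg zero_le_one
      (fun t _ => mul_nonneg (abs_nonneg _) (abs_nonneg _))
  have hA0 : ∀ x, 0 ≤ A x := fun x =>
    intervalIntegral.integral_nonneg zero_le_one (fun t _ => sq_nonneg _)
  have hB0 : ∀ x, 0 ≤ B x := fun x =>
    intervalIntegral.integral_nonneg zero_le_one (fun t _ => sq_nonneg _)
  -- Pointwise bound : M x ^ 2 ≤ 2 * Φ x
  have key : ∀ x, M x ^ 2 ≤ 2 * Φ x := by
    intro x
    obtain ⟨z₀, hz₀, hfz₀⟩ := exists_zero_of_mean_zero (fun z => f x z) (hfx x) (hmean x)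
    have h2Φ0 : (0:ℝ) ≤ 2 * Φ x := by linarith [hΦ0 x]
    -- a generic bound for integrals over subintervals of [0,1]
    have mono2 : ∀ (h : ℝ → ℝ), Continuous h →
        (∀ t, h t ≤ 2 * (|f x t| * |pz2 f x t|)) →
        ∀ c d : ℝ, 0 ≤ c → c ≤ d → d ≤ 1 → (∫ t in c..d, h t) ≤ 2 * Φ x := by
      intro h hc hle c d h0c hcd hd1
      have hcont2 : Continuous (fun t => 2 * (|f x t| * |pz2 f x t|)) :=
        continuous_const.mul ((hfx x).abs.mul (hgx x).abs)
      calc (∫ t in c..d, h t) ≤ ∫ t in c..d, 2 * (|f x t| * |pz2 f x t|) :=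
            intervalIntegral.integral_mono_on hcd (hc.intervalIntegrable c d)
              (hcont2.intervalIntegrable c d) (fun t _ => hle t)
        _ ≤ ∫ t in (0:ℝ)..1, 2 * (|f x t| * |pz2 f x t|) := by
            apply intervalIntegral.integral_mono_interval h0c hcd hd1
            · filter_upwards with t using mul_nonneg zero_le_two
                (mul_nonneg (abs_nonneg _) (abs_nonneg _))
            · exact hcont2.intervalIntegrable 0 1
        _ = 2 * Φ x := by rw [hΦdef]; exact intervalIntegral.integral_const_mul 2 _
    have hbound : ∀ z ∈ Set.Icc (0:ℝ) 1, (f x z) ^ 2 ≤ 2 * Φ x := by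
      intro z hz
      have hFTC : (∫ t in z₀..z, 2 * f x t * pz2 f x t) = (f x z) ^ 2 - (f x z₀) ^ 2 := by
        apply intervalIntegral.integral_eq_sub_of_hasDerivAt
        · intro t _
          have hp := (hderivAt' x t).fun_pow 2
          simpa [mul_comm, mul_assoc, mul_left_comm] using hp
        · exact (((continuous_const.mul (hfx x)).mul (hgx x)).intervalIntegrable z₀ z)
      have hfz : (f x z) ^ 2 = ∫ t in z₀..z, 2 * f x t * pz2 f x t := by
        rw [hFTC, hfz₀]; ring
      have habs : ∀ t, 2 * f x t * pz2 f x t ≤ 2 * (|f x t| * |pz2 f x t|) := by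
        intro t
        calc 2 * f x t * pz2 f x t ≤ |2 * f x t * pz2 f x t| := le_abs_self _
          _ = 2 * (|f x t| * |pz2 f x t|) := by
              rw [abs_mul, abs_mul]; simp [abs_of_nonneg, mul_assoc]
      have habs' : ∀ t, -(2 * f x t * pz2 f x t) ≤ 2 * (|f x t| * |pz2 f x t|) := by
        intro t
        calc -(2 * f x t * pz2 f x t) ≤ |2 * f x t * pz2 f x t| := neg_le_abs _
          _ = 2 * (|f x t| * |pz2 f x t|) := by
              rw [abs_mul, abs_mul]; simp [abs_of_nonneg, mul_assoc]
      rcases le_total z₀ z with hzz | hzz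
      · rw [hfz]
        exact mono2 _ ((continuous_const.mul (hfx x)).mul (hgx x)) habs z₀ z hz₀.1 hzz hz.2
      · rw [hfz, intervalIntegral.integral_symm, ← intervalIntegral.integral_neg]
        exact mono2 _ ((continuous_const.mul (hfx x)).mul (hgx x)).neg habs' z z₀ hz.1 hzz hz₀.2
    -- from the pointwise bound to the sup
    have hub : ∀ z : Set.Icc (0:ℝ) 1, |f x (z : ℝ)| ≤ Real.sqrt (2 * Φ x) := fun z =>
      Real.abs_le_sqrt (hbound z z.2)
    haveI : Nonempty (Set.Icc (0:ℝ) 1) := ⟨⟨0, Set.left_mem_Icc.mpr zero_le_one⟩⟩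
    have hMle : M x ≤ Real.sqrt (2 * Φ x) := ciSup_le hub
    have hbdd : BddAbove (Set.range fun z : Set.Icc (0:ℝ) 1 => |f x (z : ℝ)|) := by
      refine ⟨Real.sqrt (2 * Φ x), ?_⟩
      rintro _ ⟨z, rfl⟩; exact hub z
    have hM0 : 0 ≤ M x :=
      le_trans (abs_nonneg _) (le_ciSup hbdd ⟨0, Set.left_mem_Icc.mpr zero_le_one⟩)
    calc M x ^ 2 ≤ Real.sqrt (2 * Φ x) ^ 2 := by gcongr
      _ = 2 * Φ x := Real.sq_sqrt h2Φ0
  -- Continuity of the various x-functions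
  have hMc : Continuous M := by
    have hc : Continuous (fun p : ℝ × (Set.Icc (0:ℝ) 1) => f p.1 (p.2 : ℝ)) :=
      hFc.comp (continuous_fst.prodMk (continuous_subtype_val.comp continuous_snd))
    let Fcm : C(ℝ × (Set.Icc (0:ℝ) 1), ℝ) := ⟨_, hc⟩
    have keyM : ∀ x, M x = ‖Fcm.curry x‖ := by
      intro x
      rw [ContinuousMap.norm_eq_iSup_norm]
      simp [Fcm, Real.norm_eq_abs, hMdef]
    simp only [funext keyM]
    exact continuous_norm.comp Fcm.curry.continuous
  have hΦc : Continuous Φ := by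
    apply intervalIntegral.continuous_parametric_intervalIntegral_of_continuous'
      (f := fun x t => |f x t| * |pz2 f x t|)
    exact hFc.abs.mul hgc.abs
  have hAc : Continuous A := by
    apply intervalIntegral.continuous_parametric_intervalIntegral_of_continuous'
      (f := fun x t => (f x t) ^ 2)
    exact hFc.pow 2
  have hBc : Continuous B := by
    apply intervalIntegral.continuous_parametric_intervalIntegral_of_continuous'
      (f := fun x t => (pz2 f x t) ^ 2)
    exact hgc.pow 2
  -- inner Cauchy–Schwarz : Φ x ≤ √(A x) * √(B x)
  have inner : ∀ x, Φ x ≤ Real.sqrt (A x) * Real.sqrt (B x) := by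
    intro x
    have h1 : Φ x ≤ Real.sqrt (∫ z in (0:ℝ)..1, |f x z| ^ 2) *
        Real.sqrt (∫ z in (0:ℝ)..1, |pz2 f x z| ^ 2) :=
      cs_interval zero_le_one ((hfx x).abs.continuousOn) ((hgx x).abs.continuousOn)
    have e1 : (∫ z in (0:ℝ)..1, |f x z| ^ 2) = A x := by
      apply intervalIntegral.integral_congr; intro t _; exact sq_abs _
    have e2 : (∫ z in (0:ℝ)..1, |pz2 f x z| ^ 2) = B x := by
      apply intervalIntegral.integral_congr; intro t _; exact sq_abs _
    rwa [e1, e2] at h1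
  -- outer Cauchy–Schwarz
  have outer : (∫ x in (0:ℝ)..α, Real.sqrt (A x) * Real.sqrt (B x)) ≤
      Real.sqrt (∫ x in (0:ℝ)..α, A x) * Real.sqrt (∫ x in (0:ℝ)..α, B x) := by
    have h1 := cs_interval hα.le
      ((Real.continuous_sqrt.comp hAc).continuousOn (s := Set.Icc 0 α))
      ((Real.continuous_sqrt.comp hBc).continuousOn (s := Set.Icc 0 α))
    have e1 : (∫ x in (0:ℝ)..α, Real.sqrt (A x) ^ 2) = ∫ x in (0:ℝ)..α, A x := by
      apply intervalIntegral.integral_congr; intro t _; exact Real.sq_sqrt (hA0 t)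
    have e2 : (∫ x in (0:ℝ)..α, Real.sqrt (B x) ^ 2) = ∫ x in (0:ℝ)..α, B x := by
      apply intervalIntegral.integral_congr; intro t _; exact Real.sq_sqrt (hB0 t)
    simp only [Function.comp_apply] at h1
    rwa [e1, e2] at h1
  -- assemble
  have step1 : (∫ x in (0:ℝ)..α, M x ^ 2) ≤ ∫ x in (0:ℝ)..α, 2 * Φ x :=
    intervalIntegral.integral_mono_on hα.le
      ((hMc.pow 2).intervalIntegrable 0 α)
      ((continuous_const.mul hΦc).intervalIntegrable 0 α)
      (fun x _ => key x)
  have step2 : (∫ x in (0:ℝ)..α, 2 * Φ x) = 2 * ∫ x in (0:ℝ)..α, Φ x :=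
    intervalIntegral.integral_const_mul 2 _
  have step3 : (∫ x in (0:ℝ)..α, Φ x) ≤ ∫ x in (0:ℝ)..α, Real.sqrt (A x) * Real.sqrt (B x) :=
    intervalIntegral.integral_mono_on hα.le
      (hΦc.intervalIntegrable 0 α)
      (((Real.continuous_sqrt.comp hAc).mul (Real.continuous_sqrt.comp hBc)).intervalIntegrable 0 α)
      (fun x _ => inner x)
  have eL2f : L2norm α f = Real.sqrt (∫ x in (0:ℝ)..α, A x) := rfl
  have eL2g : L2norm α (pz2 f) = Real.sqrt (∫ x in (0:ℝ)..α, B x) := rfl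
  calc (∫ x in (0:ℝ)..α, M x ^ 2)
      ≤ 2 * ∫ x in (0:ℝ)..α, Φ x := by rw [← step2]; exact step1
    _ ≤ 2 * ∫ x in (0:ℝ)..α, Real.sqrt (A x) * Real.sqrt (B x) := by linarith [step3]
    _ ≤ 2 * (Real.sqrt (∫ x in (0:ℝ)..α, A x) * Real.sqrt (∫ x in (0:ℝ)..α, B x)) := by
        linarith [outer]
    _ = 2 * L2norm α f * L2norm α (pz2 f) := by rw [eL2f, eL2g]; ring
end
end
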